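/- arXiv:1605.02087 — 9 statements merged into one kernel-verified Lean document; each statement's English description precedes it below -/
import Mathlib

section
/- Let n ≥ 2 and let p : [n] × [n] → [0,1] be a function (not necessarily symmetric). If the generalized arc random digraph D(n,p) is isomorphism-invariant, then p is constant off the diagonal, i.e., p(i,j) = p(k,l) for all ordered pairs of distinct indices (i,j) and (k,l); hence D(n,p) is an arc random digraph D(n,p_a) with p_a equal to this common value. -/
open Finset

/-- A finset of ordered pairs is (the arc set of) a digraph on `Fin n` if it has no loops. -/
def IsDigraph {n : ℕ} (A : Finset (Fin n × Fin n)) : Prop := ∀ p ∈ A, p.1 ≠ p.2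

/-- The probability that the generalized arc random digraph `D(n, p)` equals the digraph
with arc set `A`: each arc `(i,j)` is present independently with probability `p i j`. -/
def gardP {n : ℕ} (p : Fin n → Fin n → ℝ) (A : Finset (Fin n × Fin n)) : ℝ :=
  (∏ q ∈ A, p q.1 q.2) *
    ∏ q ∈ Finset.univ.filter (fun q : Fin n × Fin n => q.1 ≠ q.2 ∧ q ∉ A), (1 - p q.1 q.2)

/-- If a generalized arc random digraph is isomorphism-invariant, then the arc probability
function is constant off the diagonal, and hence the GARD is an arc random digraph. -/
theorem stmt0 {n : ℕ} (hn : 2 ≤ n) (p : Fin n → Fin n → ℝ)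
    (hp : ∀ i j : Fin n, 0 ≤ p i j ∧ p i j ≤ 1)
    (hinv : ∀ A₁ A₂ : Finset (Fin n × Fin n), IsDigraph A₁ → IsDigraph A₂ →
      (∃ σ : Equiv.Perm (Fin n), ∀ i j : Fin n, (i, j) ∈ A₁ ↔ (σ i, σ j) ∈ A₂) →
      gardP p A₁ = gardP p A₂) :
    ∃ pa : ℝ, (∀ i j : Fin n, i ≠ j → p i j = pa) ∧
      ∀ A : Finset (Fin n × Fin n), IsDigraph A →
        gardP p A = pa ^ A.card * (1 - pa) ^ (n * (n - 1) - A.card) := by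
  classical
  set Ω : Finset (Fin n × Fin n) := Finset.univ.filter (fun q => q.1 ≠ q.2) with hΩ
  have hmemΩ : ∀ q : Fin n × Fin n, q ∈ Ω ↔ q.1 ≠ q.2 := by
    intro q; simp [hΩ]
  -- rewrite of gardP for digraphs
  have hgard : ∀ B : Finset (Fin n × Fin n), B ⊆ Ω →
      gardP p B = (∏ q ∈ B, p q.1 q.2) * ∏ q ∈ Ω \ B, (1 - p q.1 q.2) := by
    intro B hB
    unfold gardP
    congr 1
    apply Finset.prod_congr _ fun _ _ => rfl
    ext q
    simp only [Finset.mem_filter, Finset.mem_univ, true_and, Finset.mem_sdiff, hmemΩ]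
  -- digraph iff subset of Ω
  have hdig : ∀ B : Finset (Fin n × Fin n), IsDigraph B ↔ B ⊆ Ω := by
    intro B
    constructor
    · intro h q hq; exact (hmemΩ q).2 (h q hq)
    · intro h q hq; exact (hmemΩ q).1 (h hq)
  -- marginal probability of a single arc
  have hmarg : ∀ i j : Fin n, i ≠ j →
      ∑ S ∈ (Ω.erase (i,j)).powerset, gardP p (insert (i,j) S) = p i j := by
    intro i j hij
    have hijΩ : (i,j) ∈ Ω := (hmemΩ _).2 hij
    have hterm : ∀ S ∈ (Ω.erase (i,j)).powerset,
        gardP p (insert (i,j) S) =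
          p i j * ((∏ q ∈ S, p q.1 q.2) * ∏ q ∈ (Ω.erase (i,j)) \ S, (1 - p q.1 q.2)) := by
      intro S hS
      rw [Finset.mem_powerset] at hS
      have hSΩ : S ⊆ Ω := hS.trans (Finset.erase_subset _ _)
      have hnot : (i,j) ∉ S := fun h => (Finset.mem_erase.1 (hS h)).1 rfl
      rw [hgard _ (Finset.insert_subset hijΩ hSΩ), Finset.prod_insert hnot]
      have heq : Ω \ insert (i,j) S = (Ω.erase (i,j)) \ S := by
        ext q
        simp only [Finset.mem_sdiff, Finset.mem_insert, Finset.mem_erase]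
        tauto
      rw [heq]; ring
    rw [Finset.sum_congr rfl hterm, ← Finset.mul_sum, ← Finset.prod_add]
    simp
  -- constancy off the diagonal
  have hconst : ∀ i j k l : Fin n, i ≠ j → k ≠ l → p i j = p k l := by
    intro i j k l hij hkl
    set j' : Fin n := Equiv.swap i k j with hj'
    have hj'k : j' ≠ k := by
      intro h
      apply hij
      apply (Equiv.swap i k).injective
      show (Equiv.swap i k) i = (Equiv.swap i k) j
      rw [Equiv.swap_apply_left, ← hj', h]
    set σ : Equiv.Perm (Fin n) := (Equiv.swap i k).trans (Equiv.swap j' l) with hσ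
    have hσi : σ i = k := by
      simp only [hσ, Equiv.trans_apply, Equiv.swap_apply_left]
      exact Equiv.swap_apply_of_ne_of_ne (Ne.symm hj'k) hkl
    have hσj : σ j = l := by
      simp only [hσ, Equiv.trans_apply, ← hj', Equiv.swap_apply_left]
    set e : Fin n × Fin n ≃ Fin n × Fin n := Equiv.prodCongr σ σ with he
    have heΩ : ∀ q : Fin n × Fin n, e q ∈ Ω ↔ q ∈ Ω := by
      intro q
      simp only [hmemΩ, he, Equiv.prodCongr_apply, Prod.map_fst, Prod.map_snd, ne_eq,
        EmbeddingLike.apply_eq_iff_eq]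
    have heij : e (i,j) = (k,l) := by simp [he, hσi, hσj]
    have himg : (Ω.erase (i,j)).image e = Ω.erase (k,l) := by
      ext q
      simp only [Finset.mem_image, Finset.mem_erase]
      constructor
      · rintro ⟨a, ⟨ha1, ha2⟩, rfl⟩
        refine ⟨fun h => ha1 (e.injective (by rw [h, heij])), (heΩ a).2 ha2⟩
      · rintro ⟨hq1, hq2⟩
        refine ⟨e.symm q, ⟨fun h => hq1 ?_, (heΩ (e.symm q)).1 (by simpa using hq2)⟩,
          e.apply_symm_apply q⟩
        rw [← e.apply_symm_apply q, h, heij]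
    -- each term equal under the permutation
    have hterm : ∀ S ∈ (Ω.erase (i,j)).powerset,
        gardP p (insert (i,j) S) = gardP p (insert (k,l) (S.image e)) := by
      intro S hS
      rw [Finset.mem_powerset] at hS
      have hSΩ : S ⊆ Ω := hS.trans (Finset.erase_subset _ _)
      have hSΩ' : S.image e ⊆ Ω := by
        intro q hq
        rcases Finset.mem_image.1 hq with ⟨a, ha, rfl⟩
        exact (heΩ a).2 (hSΩ ha)
      have hijΩ : (i,j) ∈ Ω := (hmemΩ _).2 hij
      have hklΩ : (k,l) ∈ Ω := (hmemΩ _).2 hkl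
      refine hinv _ _ ((hdig _).2 (Finset.insert_subset hijΩ hSΩ))
        ((hdig _).2 (Finset.insert_subset hklΩ hSΩ')) ⟨σ, fun a b => ?_⟩
      have key : insert (k,l) (S.image e) = (insert (i,j) S).image e := by
        rw [Finset.image_insert, heij]
      rw [key]
      have : ((σ a, σ b) : Fin n × Fin n) = e (a, b) := rfl
      rw [this]
      exact ⟨fun h => Finset.mem_image_of_mem e h,
        fun h => by
          rcases Finset.mem_image.1 h with ⟨c, hc, hce⟩
          rwa [← e.injective hce]⟩
    have hsum : ∑ S ∈ (Ω.erase (i,j)).powerset, gardP p (insert (i,j) S)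
        = ∑ S' ∈ (Ω.erase (k,l)).powerset, gardP p (insert (k,l) S') := by
      rw [Finset.sum_congr rfl hterm]
      apply Finset.sum_bij (fun S _ => S.image e)
      · intro S hS
        rw [Finset.mem_powerset] at hS ⊢
        rw [← himg]
        exact Finset.image_subset_image hS
      · intro S₁ h₁ S₂ h₂ h
        exact Finset.image_injective e.injective h
      · intro S' hS'
        rw [Finset.mem_powerset] at hS'
        refine ⟨S'.image e.symm, Finset.mem_powerset.2 ?_, ?_⟩
        · intro q hq
          rcases Finset.mem_image.1 hq with ⟨a, ha, rfl⟩
          have : a ∈ (Ω.erase (i,j)).image e := himg ▸ hS' ha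
          rcases Finset.mem_image.1 this with ⟨b, hb, rfl⟩
          simp only [Equiv.symm_apply_apply]; exact hb
        · rw [Finset.image_image]
          simp
      · intro S hS; rfl
    rw [← hmarg i j hij, ← hmarg k l hkl, hsum]
  -- choose the common value
  have h0 : (0 : ℕ) < n := lt_of_lt_of_le (by norm_num) hn
  have h1 : (1 : ℕ) < n := hn
  set i₀ : Fin n := ⟨0, h0⟩
  set j₀ : Fin n := ⟨1, h1⟩
  have hi₀j₀ : i₀ ≠ j₀ := by
    intro h
    simpa [i₀, j₀, Fin.ext_iff] using h
  refine ⟨p i₀ j₀, fun i j hij => hconst i j i₀ j₀ hij hi₀j₀, fun A hA => ?_⟩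
  have hAΩ : A ⊆ Ω := (hdig A).1 hA
  have hΩcard : Ω.card = n * (n - 1) := by
    have : Ω = (Finset.univ : Finset (Fin n)).offDiag := by
      ext q
      simp [hmemΩ, Finset.mem_offDiag]
    rw [this, Finset.offDiag_card]
    simp [Nat.mul_sub, Nat.mul_one]
  rw [hgard A hAΩ]
  have h1' : ∏ q ∈ A, p q.1 q.2 = (p i₀ j₀) ^ A.card := by
    rw [Finset.prod_congr rfl (fun q hq => hconst q.1 q.2 i₀ j₀ ((hmemΩ q).1 (hAΩ hq)) hi₀j₀),
      Finset.prod_const]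
  have h2' : ∏ q ∈ Ω \ A, (1 - p q.1 q.2) = (1 - p i₀ j₀) ^ (n * (n-1) - A.card) := by
    rw [Finset.prod_congr rfl (fun q hq => by
        rw [hconst q.1 q.2 i₀ j₀ ((hmemΩ q).1 (Finset.mem_sdiff.1 hq).1) hi₀j₀]),
      Finset.prod_const, Finset.card_sdiff_of_subset hAΩ, hΩcard]
  rw [h1', h2']
end

section
/- Let n ≥ 4 and 0 < p_a < 1. If the arc random digraph D(n,p_a) is represented as a vertex-arc random digraph D(n,Ω,μ,φ), i.e., p_a^{|A(D)|}(1−p_a)^{n(n−1)−|A(D)|} = ∫ ∏_{(i,j)∈A(D)} φ(x_i,x_j) · ∏_{(i,j)∉A(D), i≠j} (1 − φ(x_i,x_j)) dμⁿ(x) holds for every digraph D on [n], then φ(x,y) = p_a for μ×μ-almost every (x,y) ∈ Ω × Ω. -/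
/-!
Summing the representation identity over all digraphs that contain a given loopless arc set `S`
gives `𝔼 ∏_{(i,j) ∈ S} φ(xᵢ, xⱼ) = p_a ^ |S|`; expanding the product, the centred kernel
`g = φ - p_a` satisfies `𝔼 ∏_{(i,j) ∈ S} g(xᵢ, xⱼ) = 0` for every nonempty `S`. For `S` the
complete bipartite digraph `K₂,₂` (this is where `n ≥ 4` is needed) that moment equals
`∫∫ H(x, y)²`, where `H(x, y) = ∫ g(x, z) g(y, z) dz` is the codegree kernel of `g`; hence
`H = 0` a.e. Then for every set `E`, the function `z ↦ ∫_E g(x, z) dx` has square integral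
`∫_{E × E} H = 0`, so `g` integrates to zero over every rectangle `E × F`, and therefore `g = 0`
almost everywhere.
-/

open MeasureTheory Finset

/-- The probability that the vertex-arc random digraph `D(n, Ω, μ, φ)` equals the digraph
with arc set `A`. -/
noncomputable def vardP {Ω : Type*} [MeasurableSpace Ω] (μ : Measure Ω) {n : ℕ}
    (φ : Ω → Ω → ℝ) (A : Finset (Fin n × Fin n)) : ℝ :=
  ∫ x : Fin n → Ω,
    (∏ p ∈ A, φ (x p.1) (x p.2)) *
      ∏ p ∈ Finset.univ.filter (fun p : Fin n × Fin n => p.1 ≠ p.2 ∧ p ∉ A),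
        (1 - φ (x p.1) (x p.2)) ∂(Measure.pi fun _ : Fin n => μ)

/-- `D(n, p_a)` and `D(n, Ω, μ, φ)` have the same law. -/
def IsArdRepresentation {Ω : Type*} [MeasurableSpace Ω] (μ : Measure Ω) (φ : Ω → Ω → ℝ)
    (n : ℕ) (pa : ℝ) : Prop :=
  ∀ A : Finset (Fin n × Fin n), IsDigraph A →
    pa ^ A.card * (1 - pa) ^ (n * (n - 1) - A.card) = vardP μ φ A

lemma isDigraph_iff_subset_offDiag {n : ℕ} {A : Finset (Fin n × Fin n)} :
    IsDigraph A ↔ A ⊆ univ.offDiag := by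
  simp [IsDigraph, Finset.subset_iff, Finset.mem_offDiag]

lemma filter_ne_and_not_mem_eq_offDiag_sdiff {n : ℕ} (A : Finset (Fin n × Fin n)) :
    univ.filter (fun p : Fin n × Fin n => p.1 ≠ p.2 ∧ p ∉ A) = univ.offDiag \ A := by
  ext p; simp [Finset.mem_offDiag]

lemma card_offDiag_univ_fin (n : ℕ) : (univ : Finset (Fin n)).offDiag.card = n * (n - 1) := by
  rw [Finset.offDiag_card, Finset.card_univ, Fintype.card_fin, Nat.mul_sub_one]

lemma norm_prod_le_pow_card {ι R : Type*} [SeminormedCommRing R] [NormMulClass R] [NormOneClass R]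
    (s : Finset ι) {f : ι → R} {C : ℝ} (hf : ∀ i ∈ s, ‖f i‖ ≤ C) : ‖∏ i ∈ s, f i‖ ≤ C ^ s.card := by
  rw [norm_prod, ← Finset.prod_const]
  exact Finset.prod_le_prod (fun i _ => norm_nonneg _) hf

lemma norm_le_one_of_mem_unitInterval {t : ℝ} (ht : t ∈ unitInterval) : ‖t‖ ≤ 1 := by
  rw [Real.norm_of_nonneg ht.1]; exact ht.2

lemma norm_sub_le_one_add_norm {t : ℝ} (ht : t ∈ unitInterval) (a : ℝ) :
    ‖t - a‖ ≤ 1 + ‖a‖ :=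
  (norm_sub_le t a).trans (by linarith [norm_le_one_of_mem_unitInterval ht])

lemma ae_eq_zero_of_forall_setIntegral_prod_eq_zero {α β E : Type*} [MeasurableSpace α]
    [MeasurableSpace β] [NormedAddCommGroup E] [NormedSpace ℝ E] [CompleteSpace E]
    {μ : Measure α} {ν : Measure β} [SFinite ν] {f : α × β → E} (hf : Integrable f (μ.prod ν))
    (h : ∀ s t, MeasurableSet s → MeasurableSet t → ∫ q in s ×ˢ t, f q ∂(μ.prod ν) = 0) :
    f =ᵐ[μ.prod ν] 0 := by
  suffices ∀ u, MeasurableSet u → ∫ q in u, f q ∂(μ.prod ν) = 0 from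
    hf.ae_eq_zero_of_forall_setIntegral_eq_zero fun u hu _ => this u hu
  intro u hu
  induction u, hu using
    MeasurableSpace.induction_on_inter generateFrom_prod.symm isPiSystem_prod with
  | empty => simp
  | basic u hu =>
    obtain ⟨s, hs, t, ht, rfl⟩ := hu
    exact h s t hs ht
  | compl u hu hfu =>
    have htot := h Set.univ Set.univ MeasurableSet.univ MeasurableSet.univ
    rw [Set.univ_prod_univ, Measure.restrict_univ] at htot
    simpa [hfu, htot] using integral_add_compl hu hf
  | iUnion u hdisj hu hfu =>
    rw [integral_iUnion hu hdisj hf.integrableOn]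
    simp [hfu]

lemma measurePreserving_comp_of_injective {Ω V ι : Type*} [MeasurableSpace Ω] {μ : Measure Ω}
    [IsProbabilityMeasure μ] [Fintype V] [Fintype ι] {f : V → ι} (hf : Function.Injective f) :
    MeasurePreserving (fun x : ι → Ω => x ∘ f) (Measure.pi fun _ => μ) (Measure.pi fun _ => μ) := by
  classical
  -- `x ∘ f` is the first component of `x` under `ι ≃ V ⊕ (range f)ᶜ`
  let e : V ⊕ ↥(Set.range f)ᶜ ≃ ι :=
    (Equiv.sumCongr (Equiv.ofInjective f hf) (Equiv.refl _)).trans (Equiv.Set.sumCompl _)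
  convert measurePreserving_fst.comp ((measurePreserving_sumPiEquivProdPi fun _ => μ).comp
    (measurePreserving_piCongrLeft (fun _ : ι => μ) e).symm) using 1
  funext x v
  simp [e, MeasurableEquiv.sumPiEquivProdPi, MeasurableEquiv.piCongrLeft,
    Equiv.piCongrLeft_symm_apply]

section Kernel

variable {Ω : Type*} [MeasurableSpace Ω] {μ : Measure Ω} [IsFiniteMeasure μ] {g : Ω → Ω → ℝ}
  {C : ℝ}

lemma integral_prod_bipartite_eq_integral_codegree_sq
    (hg : Measurable (Function.uncurry g)) (hC : ∀ x y, ‖g x y‖ ≤ C) :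
    ∫ y : Fin 2 ⊕ Fin 2 → Ω, ∏ j, ∏ i, g (y (.inl i)) (y (.inr j)) ∂(Measure.pi fun _ => μ)
      = ∫ q : Ω × Ω, (∫ z, g q.1 z * g q.2 z ∂μ) ^ 2 ∂(μ.prod μ) := by
  rw [← (measurePreserving_sumPiEquivProdPi_symm fun _ => μ).integral_comp',
    ← (measurePreserving_finTwoArrow μ).integral_comp']
  have hint : Integrable (fun w : (Fin 2 → Ω) × (Fin 2 → Ω) => ∏ j, ∏ i, g (w.1 i) (w.2 j))
      ((Measure.pi fun _ => μ).prod (Measure.pi fun _ => μ)) :=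
    Integrable.of_bound (Measurable.aestronglyMeasurable (by fun_prop)) _ (ae_of_all _ fun w =>
      norm_prod_le_pow_card _ fun j _ => norm_prod_le_pow_card _ fun i _ => hC _ _)
  refine (integral_prod _ hint).trans (integral_congr_ae (ae_of_all _ fun u => ?_))
  simp only [MeasurableEquiv.finTwoArrow_apply]
  rw [integral_fintype_prod_eq_pow (fun z => ∏ i, g (u i) z)]
  simp [Fin.prod_univ_two]

lemma integrable_codegree_sq (hg : Measurable (Function.uncurry g)) (hC : ∀ x y, ‖g x y‖ ≤ C) :
    Integrable (fun q : Ω × Ω => (∫ z, g q.1 z * g q.2 z ∂μ) ^ 2) (μ.prod μ) := by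
  have hm : Measurable fun w : (Ω × Ω) × Ω => g w.1.1 w.2 * g w.1.2 w.2 := by fun_prop
  refine Integrable.of_bound
    (hm.stronglyMeasurable.integral_prod_right'.measurable.pow_const 2).aestronglyMeasurable
    ((C * C * μ.real Set.univ) ^ 2) (ae_of_all _ fun q => ?_)
  rw [norm_pow]
  exact pow_le_pow_left₀ (norm_nonneg _) (norm_integral_le_of_norm_le_const
    (ae_of_all _ fun z => norm_mul_le_of_le (hC _ _) (hC _ _))) 2

lemma ae_setIntegral_eq_zero_of_codegree_ae_eq_zero (hg : Measurable (Function.uncurry g))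
    (hC : ∀ x y, ‖g x y‖ ≤ C) (hH : ∀ᵐ q ∂(μ.prod μ), ∫ z, g q.1 z * g q.2 z ∂μ = 0)
    (E : Set Ω) : ∀ᵐ z ∂μ, ∫ x in E, g x z ∂μ = 0 := by
  have hsq : ∫ z, (∫ x in E, g x z ∂μ) ^ 2 ∂μ = 0 := calc
    ∫ z, (∫ x in E, g x z ∂μ) ^ 2 ∂μ
        = ∫ z, ∫ q, g q.1 z * g q.2 z ∂((μ.restrict E).prod (μ.restrict E)) ∂μ := by
          congr 1 with z
          rw [sq, integral_prod_mul (fun x => g x z) (fun x => g x z)]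
      _ = ∫ q, ∫ z, g q.1 z * g q.2 z ∂μ ∂((μ.restrict E).prod (μ.restrict E)) :=
          integral_integral_swap (Integrable.of_bound
            (Measurable.aestronglyMeasurable (by fun_prop)) (C * C)
            (ae_of_all _ fun _ => norm_mul_le_of_le (hC _ _) (hC _ _)))
      _ = 0 := by
          rw [Measure.prod_restrict]
          exact integral_eq_zero_of_ae (ae_restrict_of_ae hH)
  have hint : Integrable (fun z => (∫ x in E, g x z ∂μ) ^ 2) μ := by
    refine Integrable.of_bound
      (hg.stronglyMeasurable.integral_prod_left.measurable.pow_const 2).aestronglyMeasurable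
      ((C * (μ.restrict E).real Set.univ) ^ 2) (ae_of_all _ fun z => ?_)
    rw [norm_pow]
    exact pow_le_pow_left₀ (norm_nonneg _)
      (norm_integral_le_of_norm_le_const (ae_of_all _ fun x => hC x z)) 2
  filter_upwards [(integral_eq_zero_iff_of_nonneg (fun z => sq_nonneg _) hint).1 hsq] with z hz
  exact pow_eq_zero_iff two_ne_zero |>.1 hz

lemma ae_eq_zero_of_codegree_ae_eq_zero (hg : Measurable (Function.uncurry g))
    (hC : ∀ x y, ‖g x y‖ ≤ C) (hH : ∀ᵐ q ∂(μ.prod μ), ∫ z, g q.1 z * g q.2 z ∂μ = 0) :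
    ∀ᵐ q ∂(μ.prod μ), g q.1 q.2 = 0 := by
  have hint : Integrable (Function.uncurry g) (μ.prod μ) :=
    Integrable.of_bound hg.aestronglyMeasurable C (ae_of_all _ fun q => hC q.1 q.2)
  refine ae_eq_zero_of_forall_setIntegral_prod_eq_zero hint fun E F _ _ => ?_
  have hintEF := hint.restrict (s := E ×ˢ F)
  rw [← Measure.prod_restrict] at hintEF ⊢
  exact (integral_prod_symm _ hintEF).trans <| integral_eq_zero_of_ae
    (ae_restrict_of_ae (ae_setIntegral_eq_zero_of_codegree_ae_eq_zero hg hC hH E))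

end Kernel

section Representation

variable {Ω : Type*} [MeasurableSpace Ω] {μ : Measure Ω} {φ : Ω → Ω → ℝ} {n : ℕ} {pa : ℝ}

lemma integral_prod_arcs_eq_pow [IsFiniteMeasure μ] (hmeas : Measurable (Function.uncurry φ))
    (hφ : ∀ x y, φ x y ∈ Set.Icc (0 : ℝ) 1) (hrep : IsArdRepresentation μ φ n pa)
    {S : Finset (Fin n × Fin n)} (hS : IsDigraph S) :
    ∫ x, ∏ p ∈ S, φ (x p.1) (x p.2) ∂(Measure.pi fun _ => μ) = pa ^ S.card := by
  classical
  rw [isDigraph_iff_subset_offDiag] at hS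
  set T := (univ : Finset (Fin n)).offDiag \ S
  -- `∏_S φ` is the sum, over all digraphs `S ∪ A` with `A ⊆ T`, of the integrands of `vardP`
  have hsplit : ∀ x : Fin n → Ω, ∏ p ∈ S, φ (x p.1) (x p.2) = ∑ A ∈ T.powerset,
      (∏ p ∈ S ∪ A, φ (x p.1) (x p.2)) * ∏ p ∈ T \ A, (1 - φ (x p.1) (x p.2)) := fun x => by
    have hT : ∑ A ∈ T.powerset,
        (∏ p ∈ A, φ (x p.1) (x p.2)) * ∏ p ∈ T \ A, (1 - φ (x p.1) (x p.2)) = 1 := by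
      rw [← Finset.prod_add]; simp
    conv_lhs => rw [← mul_one (∏ p ∈ S, _), ← hT, Finset.mul_sum]
    refine Finset.sum_congr rfl fun A hA => ?_
    rw [Finset.prod_union (Finset.disjoint_sdiff.mono_right (Finset.mem_powerset.1 hA)), mul_assoc]
  have hcardT : T.card = n * (n - 1) - S.card := by
    rw [Finset.card_sdiff_of_subset hS, card_offDiag_univ_fin]
  have hterm : ∀ A ∈ T.powerset,
      ∫ x, (∏ p ∈ S ∪ A, φ (x p.1) (x p.2)) * ∏ p ∈ T \ A, (1 - φ (x p.1) (x p.2))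
        ∂(Measure.pi fun _ => μ) = pa ^ S.card * (pa ^ A.card * (1 - pa) ^ (T \ A).card) := by
    intro A hA
    rw [Finset.mem_powerset] at hA
    have hdisj : Disjoint S A := Finset.disjoint_sdiff.mono_right hA
    have hSA : IsDigraph (S ∪ A) :=
      isDigraph_iff_subset_offDiag.2 (Finset.union_subset hS (hA.trans Finset.sdiff_subset))
    rw [← mul_assoc, ← pow_add, ← Finset.card_union_of_disjoint hdisj,
      Finset.card_sdiff_of_subset hA, hcardT, Nat.sub_sub, ← Finset.card_union_of_disjoint hdisj,
      hrep _ hSA, vardP, filter_ne_and_not_mem_eq_offDiag_sdiff, sdiff_sdiff_left,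
      Finset.sup_eq_union]
  have hbinom : ∑ A ∈ T.powerset, pa ^ A.card * (1 - pa) ^ (T \ A).card = 1 := by
    simpa using (Finset.prod_add (fun _ => pa) (fun _ => 1 - pa) T).symm
  calc ∫ x, ∏ p ∈ S, φ (x p.1) (x p.2) ∂(Measure.pi fun _ => μ)
      = ∑ A ∈ T.powerset, ∫ x, (∏ p ∈ S ∪ A, φ (x p.1) (x p.2)) *
          ∏ p ∈ T \ A, (1 - φ (x p.1) (x p.2)) ∂(Measure.pi fun _ => μ) := by
        simp_rw [hsplit]
        refine integral_finsetSum _ fun A _ => Integrable.of_bound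
          (Measurable.aestronglyMeasurable (by fun_prop)) 1 (ae_of_all _ fun x => ?_)
        exact norm_le_one_of_mem_unitInterval <| unitInterval.mul_mem
          (unitInterval.prod_mem fun p _ => hφ _ _)
          (unitInterval.prod_mem fun p _ => Set.Icc.mem_iff_one_sub_mem.1 (hφ _ _))
    _ = pa ^ S.card := by rw [Finset.sum_congr rfl hterm, ← Finset.mul_sum, hbinom, mul_one]

lemma integral_prod_arcs_sub_eq_zero [IsFiniteMeasure μ] (hmeas : Measurable (Function.uncurry φ))
    (hφ : ∀ x y, φ x y ∈ Set.Icc (0 : ℝ) 1) (hrep : IsArdRepresentation μ φ n pa)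
    {S : Finset (Fin n × Fin n)} (hS : IsDigraph S) (hne : S.Nonempty) :
    ∫ x, ∏ p ∈ S, (φ (x p.1) (x p.2) - pa) ∂(Measure.pi fun _ => μ) = 0 := by
  simp_rw [sub_eq_add_neg, Finset.prod_add, Finset.prod_const]
  rw [integral_finsetSum _ fun t _ => (Integrable.of_bound
    (Measurable.aestronglyMeasurable (by fun_prop)) 1 (ae_of_all _ fun x =>
      norm_le_one_of_mem_unitInterval (unitInterval.prod_mem fun p _ => hφ _ _))).mul_const _]
  calc ∑ t ∈ S.powerset, ∫ x, (∏ p ∈ t, φ (x p.1) (x p.2)) * (-pa) ^ (S \ t).card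
        ∂(Measure.pi fun _ => μ)
      = ∑ t ∈ S.powerset, pa ^ t.card * (-pa) ^ (S \ t).card := by
        refine Finset.sum_congr rfl fun t ht => ?_
        rw [integral_mul_const, integral_prod_arcs_eq_pow hmeas hφ hrep
          fun p hp => hS p (Finset.mem_powerset.1 ht hp)]
    _ = ∏ _p ∈ S, (pa + -pa) := by rw [Finset.prod_add]; simp
    _ = 0 := by simp [Finset.card_ne_zero.2 hne]

lemma integral_codegree_sq_eq_zero [IsProbabilityMeasure μ] (hn : 4 ≤ n)
    (hmeas : Measurable (Function.uncurry φ))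
    (hφ : ∀ x y, φ x y ∈ Set.Icc (0 : ℝ) 1) (hrep : IsArdRepresentation μ φ n pa) :
    ∫ q : Ω × Ω, (∫ z, (φ q.1 z - pa) * (φ q.2 z - pa) ∂μ) ^ 2 ∂(μ.prod μ) = 0 := by
  -- the arcs `ι (inl i) → ι (inr j)` form a copy of `K₂,₂` inside the vertex set `Fin n`
  set ι : Fin 2 ⊕ Fin 2 → Fin n := Fin.castLE hn ∘ finSumFinEquiv
  have hι : Function.Injective ι := (Fin.castLE_injective hn).comp finSumFinEquiv.injective
  set S := (univ : Finset (Fin 2 × Fin 2)).image fun ij => (ι (.inl ij.1), ι (.inr ij.2))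
  have hS : IsDigraph S := by
    simp only [IsDigraph, S, Finset.mem_image]
    rintro _ ⟨ij, -, rfl⟩ h
    exact Sum.inl_ne_inr (hι h)
  have hprod : ∀ x : Fin n → Ω, ∏ p ∈ S, (φ (x p.1) (x p.2) - pa) =
      ∏ j, ∏ i, (φ ((x ∘ ι) (.inl i)) ((x ∘ ι) (.inr j)) - pa) := fun x => by
    rw [Finset.prod_image fun a _ b _ h => Prod.ext (Sum.inl_injective (hι (Prod.ext_iff.1 h).1))
      (Sum.inr_injective (hι (Prod.ext_iff.1 h).2)), Fintype.prod_prod_type, Finset.prod_comm]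
    rfl
  have hmp := measurePreserving_comp_of_injective (μ := μ) hι
  rw [← integral_prod_bipartite_eq_integral_codegree_sq (g := fun a b => φ a b - pa)
      (by fun_prop) fun x y => norm_sub_le_one_add_norm (hφ x y) pa,
    ← hmp.map_eq, integral_map hmp.aemeasurable (Measurable.aestronglyMeasurable (by fun_prop))]
  simp_rw [← hprod]
  exact integral_prod_arcs_sub_eq_zero hmeas hφ hrep hS (univ_nonempty.image _)

end Representation

theorem stmt2_general {n : ℕ} (hn : 4 ≤ n) {pa : ℝ}
    {Ω : Type*} [MeasurableSpace Ω] (μ : Measure Ω) [IsProbabilityMeasure μ]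
    (φ : Ω → Ω → ℝ) (hmeas : Measurable (Function.uncurry φ))
    (hφ : ∀ x y, φ x y ∈ Set.Icc (0 : ℝ) 1)
    (hrep : ∀ A : Finset (Fin n × Fin n), IsDigraph A →
      pa ^ A.card * (1 - pa) ^ (n * (n - 1) - A.card) = vardP μ φ A) :
    ∀ᵐ q ∂(μ.prod μ), φ q.1 q.2 = pa := by
  have hg : Measurable (Function.uncurry fun x y => φ x y - pa) := by fun_prop
  have hC : ∀ x y, ‖φ x y - pa‖ ≤ 1 + ‖pa‖ := fun x y => norm_sub_le_one_add_norm (hφ x y) pa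
  have hH : ∀ᵐ q ∂(μ.prod μ), ∫ z, (φ q.1 z - pa) * (φ q.2 z - pa) ∂μ = 0 := by
    filter_upwards [(integral_eq_zero_iff_of_nonneg (fun _ => sq_nonneg _)
      (integrable_codegree_sq hg hC)).1 (integral_codegree_sq_eq_zero hn hmeas hφ hrep)] with q hq
    exact pow_eq_zero_iff two_ne_zero |>.1 hq
  filter_upwards [ae_eq_zero_of_codegree_ae_eq_zero hg hC hH] with q hq
  exact sub_eq_zero.1 hq

/-- If an arc random digraph `D(n, p_a)` with `n ≥ 4` is represented as a vertex-arc random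
digraph `D(n, Ω, μ, φ)`, then `φ = p_a` almost surely with respect to `μ × μ`. -/
theorem stmt2 {n : ℕ} (hn : 4 ≤ n) {pa : ℝ} (hpa0 : 0 < pa) (hpa1 : pa < 1)
    {Ω : Type*} [MeasurableSpace Ω] (μ : Measure Ω) [IsProbabilityMeasure μ]
    (φ : Ω → Ω → ℝ) (hmeas : Measurable (Function.uncurry φ))
    (hφ : ∀ x y, φ x y ∈ Set.Icc (0 : ℝ) 1)
    (hrep : ∀ A : Finset (Fin n × Fin n), IsDigraph A →
      pa ^ A.card * (1 - pa) ^ (n * (n - 1) - A.card) = vardP μ φ A) :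
    ∀ᵐ q ∂(μ.prod μ), φ q.1 q.2 = pa :=
  stmt2_general hn μ φ hmeas hφ hrep
end

section
/- Let n ≥ 2, p_e ∈ (0,1), p_d ∈ [1/2,1) and p_a ∈ (0,1). The direction-edge random digraph D(n,p_e,p_d) equals the arc random digraph D(n,p_a) (as distributions on digraphs on [n]) if and only if p_d = 1/(1+√(1−p_e)) and p_a = 1 − √(1−p_e). -/
open Finset

/-- The number of symmetric arc pairs of a digraph: unordered pairs `{i,j}` with both
`(i,j)` and `(j,i)` present. -/
def nS {n : ℕ} (A : Finset (Fin n × Fin n)) : ℕ :=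
  (A.filter fun p => (p.2, p.1) ∈ A ∧ p.1 < p.2).card

/-- The number of asymmetric arcs of a digraph: arcs `(i,j)` with `(j,i)` absent. -/
def nAS {n : ℕ} (A : Finset (Fin n × Fin n)) : ℕ :=
  (A.filter fun p => (p.2, p.1) ∉ A).card

/-- The number of edges of the underlying graph of a digraph. -/
def nE {n : ℕ} (A : Finset (Fin n × Fin n)) : ℕ := nS A + nAS A

/-- Probability assigned to the digraph with arc set `A` by the direction-edge random digraph
`D(n, p_e, p_d)`. -/
def derdP (n : ℕ) (pe pd : ℝ) (A : Finset (Fin n × Fin n)) : ℝ :=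
  pe ^ nE A * (1 - pe) ^ (n.choose 2 - nE A) * (1 - pd) ^ nAS A * (2 * pd - 1) ^ nS A

/-- Probability assigned to the digraph with arc set `A` by the arc random digraph
`D(n, p_a)`. -/
def ardP (n : ℕ) (pa : ℝ) (A : Finset (Fin n × Fin n)) : ℝ :=
  pa ^ A.card * (1 - pa) ^ (n * (n - 1) - A.card)

/-!
Put `q = √(1 - p_e)`. A digraph with `s` symmetric pairs and `a` asymmetric arcs has
`2s + a` arcs and `s + a ≤ C(n,2)` underlying edges, so both probabilities are monomials in the
parameters with these exponents. Comparing them on the empty digraph forces `1 - p_e = (1 - p_a)²`,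
and then on a single arc forces `p_d = 1/(2 - p_a)`. Conversely, with `p_e = 1 - q²`,
`p_d = 1/(1 + q)` and `p_a = 1 - q`, both probabilities equal `(1 - q)^(2s+a) q^(2C(n,2)-2s-a)`.
-/

lemma two_mul_choose_two (n : ℕ) : 2 * n.choose 2 = n * (n - 1) := by
  rw [Nat.choose_two_right, Nat.mul_div_cancel' n.even_mul_pred_self.two_dvd]

namespace IsDigraph

variable {n : ℕ} {A : Finset (Fin n × Fin n)}

lemma subset_offDiag (hA : IsDigraph A) : A ⊆ (univ : Finset (Fin n)).offDiag := fun p hp ↦ by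
  simpa using hA p hp

lemma card_filter_swap_mem (hA : IsDigraph A) :
    (A.filter fun p ↦ p.swap ∈ A).card = 2 * nS A := by
  rw [← card_filter_add_card_filter_not (p := fun p : Fin n × Fin n ↦ p.1 < p.2), two_mul]
  congr 1
  · rw [filter_filter]; rfl
  · refine card_bij (fun p _ ↦ p.swap) ?_ (fun p _ q _ h ↦ Prod.swap_injective h) ?_
    · intro p hp
      simp only [mem_filter, not_lt] at hp
      exact mem_filter.2 ⟨hp.1.2, by simpa using hp.1.1,
        lt_of_le_of_ne hp.2 (hA p hp.1.1).symm⟩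
    · intro q hq
      simp only [mem_filter] at hq
      exact ⟨q.swap, mem_filter.2 ⟨mem_filter.2 ⟨hq.2.1, by simpa using hq.1⟩,
        not_lt.2 hq.2.2.le⟩, rfl⟩

lemma card_eq (hA : IsDigraph A) : A.card = 2 * nS A + nAS A := by
  rw [← hA.card_filter_swap_mem, nAS]
  exact (card_filter_add_card_filter_not _).symm

lemma two_mul_nE_le (hA : IsDigraph A) : 2 * nE A ≤ n * (n - 1) := by
  have hsub : A ∪ A.image Prod.swap ⊆ (univ : Finset (Fin n)).offDiag :=
    union_subset hA.subset_offDiag fun p hp ↦ by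
      obtain ⟨q, hq, rfl⟩ := mem_image.1 hp
      simpa [eq_comm] using hA q hq
  have hinter : A ∩ A.image Prod.swap = A.filter fun p ↦ p.swap ∈ A := by
    ext p; simp [Prod.swap_eq_iff_eq_swap]
  have := card_union_add_card_inter A (A.image Prod.swap)
  rw [hinter, hA.card_filter_swap_mem, card_image_of_injective _ Prod.swap_injective,
    hA.card_eq] at this
  have := card_le_card hsub
  rw [offDiag_card, card_univ, Fintype.card_fin, ← Nat.mul_sub_one] at this
  unfold nE
  omega

lemma nE_le (hA : IsDigraph A) : nE A ≤ n.choose 2 := by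
  have := hA.two_mul_nE_le
  rw [← two_mul_choose_two] at this
  omega

end IsDigraph

section Probabilities

variable {n : ℕ}

lemma derdP_empty (pe pd : ℝ) : derdP n pe pd ∅ = (1 - pe) ^ n.choose 2 := by
  simp [derdP, nE, nS, nAS]

lemma ardP_empty (pa : ℝ) : ardP n pa ∅ = (1 - pa) ^ (n * (n - 1)) := by
  simp [ardP]

lemma derdP_singleton {i j : Fin n} (hij : i ≠ j) (pe pd : ℝ) :
    derdP n pe pd {(i, j)} = pe * (1 - pe) ^ (n.choose 2 - 1) * (1 - pd) := by
  simp [derdP, nE, nS, nAS, filter_singleton, hij.symm]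

lemma ardP_singleton (i j : Fin n) (pa : ℝ) :
    ardP n pa {(i, j)} = pa * (1 - pa) ^ (n * (n - 1) - 1) := by
  simp [ardP]

lemma derdP_eq_ardP {A : Finset (Fin n × Fin n)} (hA : IsDigraph A) {q : ℝ} (hq : 1 + q ≠ 0) :
    derdP n (1 - q ^ 2) (1 / (1 + q)) A = ardP n (1 - q) A := by
  have hexp : n * (n - 1) - A.card = 2 * (n.choose 2 - nE A) + nAS A := by
    have := hA.nE_le
    rw [hA.card_eq, ← two_mul_choose_two]
    unfold nE at this ⊢
    omega
  have hpd : 1 - 1 / (1 + q) = q / (1 + q) := by field_simp; ring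
  have hpd' : 2 * (1 / (1 + q)) - 1 = (1 - q) / (1 + q) := by field_simp; ring
  rw [derdP, ardP, hexp, hA.card_eq, nE, hpd, hpd', sub_sub_cancel, sub_sub_cancel,
    div_pow, div_pow]
  field_simp
  rw [show 1 - q ^ 2 = (1 - q) * (1 + q) by ring, mul_pow]
  ring

end Probabilities

lemma eq_of_forall_derdP_eq_ardP {n : ℕ} (hn : 2 ≤ n) {pe pd pa : ℝ} (hpe : pe ≤ 1)
    (hpa0 : 0 < pa) (hpa1 : pa < 1)
    (h : ∀ A : Finset (Fin n × Fin n), IsDigraph A → derdP n pe pd A = ardP n pa A) :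
    1 - pe = (1 - pa) ^ 2 ∧ pd = 1 / (1 + (1 - pa)) := by
  have hempty := h ∅ (by simp [IsDigraph])
  rw [derdP_empty, ardP_empty, ← two_mul_choose_two, pow_mul] at hempty
  have hsq : 1 - pe = (1 - pa) ^ 2 :=
    (pow_left_inj₀ (by linarith) (by positivity) (Nat.choose_pos hn).ne').1 hempty
  obtain ⟨i, j, hij⟩ : ∃ i j : Fin n, i ≠ j := ⟨⟨0, by omega⟩, ⟨1, by omega⟩, by simp⟩
  have harc := h {(i, j)} (fun p hp ↦ by rwa [mem_singleton.1 hp])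
  have hexp : n * (n - 1) - 1 = 2 * (n.choose 2 - 1) + 1 := by
    have := Nat.choose_pos hn
    rw [← two_mul_choose_two]
    omega
  rw [derdP_singleton hij, ardP_singleton, hexp, pow_succ, pow_mul, ← hsq] at harc
  refine ⟨hsq, ?_⟩
  have hpos : 0 < (1 - pe) ^ (n.choose 2 - 1) := pow_pos (hsq ▸ pow_pos (sub_pos.2 hpa1) 2) _
  have hcancel : pe * (1 - pd) = pa * (1 - pa) :=
    mul_right_cancel₀ hpos.ne' (by linear_combination harc)
  have hpd : (2 - pa) * (1 - pd) = 1 - pa :=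
    mul_left_cancel₀ hpa0.ne' (by linear_combination hcancel + (1 - pd) * hsq)
  rw [eq_div_iff (by linarith)]
  linear_combination -hpd

theorem stmt5_general {n : ℕ} (hn : 2 ≤ n) {pe pd pa : ℝ}
    (hpe1 : pe < 1) (hpa0 : 0 < pa) (hpa1 : pa < 1) :
    (∀ A : Finset (Fin n × Fin n), IsDigraph A → derdP n pe pd A = ardP n pa A) ↔
      (pd = 1 / (1 + Real.sqrt (1 - pe)) ∧ pa = 1 - Real.sqrt (1 - pe)) := by
  constructor
  · intro h
    obtain ⟨hsq, hpd⟩ := eq_of_forall_derdP_eq_ardP hn hpe1.le hpa0 hpa1 h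
    have hsqrt : Real.sqrt (1 - pe) = 1 - pa := by rw [hsq, Real.sqrt_sq (by linarith)]
    rw [hsqrt, sub_sub_cancel]
    exact ⟨hpd, rfl⟩
  · rintro ⟨rfl, rfl⟩ A hA
    have := derdP_eq_ardP hA (q := Real.sqrt (1 - pe)) (by positivity)
    rwa [Real.sq_sqrt (by linarith), sub_sub_cancel] at this

/-- A direction-edge random digraph `D(n, p_e, p_d)` is the arc random digraph `D(n, p_a)`
if and only if `p_d = 1/(1+√(1-p_e))` and `p_a = 1 - √(1-p_e)`. -/
theorem stmt5 {n : ℕ} (hn : 2 ≤ n) {pe pd pa : ℝ}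
    (hpe0 : 0 < pe) (hpe1 : pe < 1) (hpd0 : 1 / 2 ≤ pd) (hpd1 : pd < 1)
    (hpa0 : 0 < pa) (hpa1 : pa < 1) :
    (∀ A : Finset (Fin n × Fin n), IsDigraph A → derdP n pe pd A = ardP n pa A) ↔
      (pd = 1 / (1 + Real.sqrt (1 - pe)) ∧ pa = 1 - Real.sqrt (1 - pe)) :=
  stmt5_general hn hpe1 hpa0 hpa1
end

section
/- No random nearest neighbor digraph is a direction random digraph: with n ≥ 3, 1 ≤ k < n−1, d ≥ 1, a norm |·| on ℝ^d, and a Borel probability measure μ on ℝ^d whose n-fold product gives full measure to tie-free configurations, there exist no probability distribution P_G on the graphs with vertex set [n] and no p_d ∈ [1/2,1) such that for every digraph D on [n], μⁿ({x : kNND(x) = D}) = P_G(U(D)) (1−p_d)^{n_as(D)} (2p_d−1)^{n_s(D)}. -/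
/-!
Every vertex of a nearest neighbor digraph has out-degree `k ≥ 1`. A direction random digraph,
on the other hand, gives positive probability to every asymmetric orientation of a graph of
positive probability, in particular to the orientation of all edges towards the larger
endpoint, in which the last vertex has out-degree `0`.
-/

open MeasureTheory Finset

/-- A finset of unordered pairs is (the edge set of) a graph on `Fin n` if it has no loops. -/
def IsGraph {n : ℕ} (G : Finset (Sym2 (Fin n))) : Prop := ∀ e ∈ G, ¬ e.IsDiag

instance {n : ℕ} : DecidablePred (IsGraph (n := n)) := fun G =>
  decidable_of_iff (∀ e ∈ G, ¬ e.IsDiag) Iff.rfl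

/-- The (edge set of the) underlying graph of a digraph. -/
def underlying {n : ℕ} (A : Finset (Fin n × Fin n)) : Finset (Sym2 (Fin n)) :=
  A.image (fun p => Sym2.mk p.1 p.2)

/-- The arc set of the `k` nearest neighbor digraph of the points `x 1, …, x n` in `ℝ^d`. -/
noncomputable def kNND {n d : ℕ} (k : ℕ) (nrm : (Fin d → ℝ) → ℝ)
    (x : Fin n → Fin d → ℝ) : Finset (Fin n × Fin n) :=
  Finset.univ.filter fun p : Fin n × Fin n => p.1 ≠ p.2 ∧
    (Finset.univ.filter fun l : Fin n =>
      l ≠ p.1 ∧ nrm (x p.1 - x l) < nrm (x p.1 - x p.2)).card < k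

/-- A configuration of points is tie-free if for each `i` the distances from `x i` to the
other points are pairwise distinct. -/
def TieFree {n d : ℕ} (nrm : (Fin d → ℝ) → ℝ) (x : Fin n → Fin d → ℝ) : Prop :=
  ∀ i j l : Fin n, j ≠ i → l ≠ i → j ≠ l → nrm (x i - x j) ≠ nrm (x i - x l)

theorem exists_mem_kNND {n d k : ℕ} (hk : 1 ≤ k) (nrm : (Fin d → ℝ) → ℝ)
    (x : Fin n → Fin d → ℝ) {i j : Fin n} (hji : j ≠ i) : ∃ l, (i, l) ∈ kNND k nrm x := by
  obtain ⟨l, hl, hmin⟩ := exists_min_image (univ.filter (· ≠ i)) (fun l => nrm (x i - x l))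
    ⟨j, by simpa using hji⟩
  have hli : l ≠ i := (mem_filter.mp hl).2
  have hcloser : univ.filter (fun m => m ≠ i ∧ nrm (x i - x m) < nrm (x i - x l)) = ∅ :=
    filter_eq_empty_iff.mpr fun m _ ⟨hmi, hlt⟩ =>
      (hmin m (by simpa using hmi)).not_gt hlt
  refine ⟨l, mem_filter.mpr ⟨mem_univ _, hli.symm, ?_⟩⟩
  simp only [hcloser, card_empty]
  omega

section UpwardOrientation

variable {n : ℕ}

def upwardOrientation (G : Finset (Sym2 (Fin n))) : Finset (Fin n × Fin n) :=
  univ.filter fun p => s(p.1, p.2) ∈ G ∧ p.1 < p.2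

variable {G : Finset (Sym2 (Fin n))}

@[simp]
theorem mem_upwardOrientation {p : Fin n × Fin n} :
    p ∈ upwardOrientation G ↔ s(p.1, p.2) ∈ G ∧ p.1 < p.2 := by
  simp [upwardOrientation]

theorem isDigraph_upwardOrientation : IsDigraph (upwardOrientation G) :=
  fun _ hp => (mem_upwardOrientation.mp hp).2.ne

theorem swap_notMem_upwardOrientation {p : Fin n × Fin n} (hp : p ∈ upwardOrientation G) :
    (p.2, p.1) ∉ upwardOrientation G := fun hq =>
  (mem_upwardOrientation.mp hp).2.not_gt (mem_upwardOrientation.mp hq).2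

theorem nS_upwardOrientation : nS (upwardOrientation G) = 0 := by
  rw [nS, card_eq_zero, filter_eq_empty_iff]
  exact fun _ hp hq => swap_notMem_upwardOrientation hp hq.1

theorem nAS_upwardOrientation : nAS (upwardOrientation G) = (upwardOrientation G).card := by
  rw [nAS, filter_true_of_mem fun _ hp => swap_notMem_upwardOrientation hp]

theorem underlying_upwardOrientation (hG : IsGraph G) : underlying (upwardOrientation G) = G := by
  ext e
  induction e using Sym2.ind with
  | _ a b =>
    simp only [underlying, mem_image, mem_upwardOrientation, Prod.exists]
    constructor
    · rintro ⟨i, j, ⟨hij, -⟩, he⟩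
      exact he ▸ hij
    · intro hab
      rcases lt_trichotomy a b with hlt | heq | hgt
      · exact ⟨a, b, ⟨hab, hlt⟩, rfl⟩
      · exact absurd (Sym2.mk_isDiag_iff.mpr heq) (hG _ hab)
      · exact ⟨b, a, ⟨Sym2.eq_swap ▸ hab, hgt⟩, Sym2.eq_swap⟩

theorem notMem_upwardOrientation_of_isMax {z : Fin n} (hz : IsMax z) (j : Fin n) :
    (z, j) ∉ upwardOrientation G := fun h =>
  (mem_upwardOrientation.mp h).2.not_isMax hz

end UpwardOrientation

theorem kNND_ne_upwardOrientation {n d k : ℕ} (hn : 2 ≤ n) (hk : 1 ≤ k)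
    (nrm : (Fin d → ℝ) → ℝ) (x : Fin n → Fin d → ℝ) (G : Finset (Sym2 (Fin n))) :
    kNND k nrm x ≠ upwardOrientation G := by
  intro hx
  let z : Fin n := ⟨n - 1, by omega⟩
  have hz : IsMax z := fun j _ => Fin.le_iff_val_le_val.mpr (by simp [z]; omega)
  obtain ⟨l, hl⟩ := exists_mem_kNND hk nrm x (j := ⟨0, by omega⟩) (i := z)
    (Fin.ne_of_val_ne (by simp [z]; omega))
  exact notMem_upwardOrientation_of_isMax hz l (hx ▸ hl)

theorem stmt11_general {n d k : ℕ} (hn : 3 ≤ n) (hk : 1 ≤ k)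
    (nrm : (Fin d → ℝ) → ℝ)
    (μ : Measure (Fin d → ℝ)) :
    ¬ ∃ (PG : Finset (Sym2 (Fin n)) → ℝ) (pd : ℝ),
        (∀ G, 0 ≤ PG G) ∧
        (∑ G ∈ Finset.univ.filter (fun G : Finset (Sym2 (Fin n)) => IsGraph G), PG G = 1) ∧
        1 / 2 ≤ pd ∧ pd < 1 ∧
        ∀ A : Finset (Fin n × Fin n), IsDigraph A →
          (Measure.pi (fun _ : Fin n => μ) {x | kNND k nrm x = A}).toReal =
            PG (underlying A) * (1 - pd) ^ nAS A * (2 * pd - 1) ^ nS A := by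
  rintro ⟨PG, pd, -, hsum, -, hpd, hDRD⟩
  obtain ⟨G, hG, hGpos⟩ : ∃ G ∈ univ.filter IsGraph, 0 < PG G :=
    exists_lt_of_sum_lt (by simp [hsum])
  have hnever : {x | kNND k nrm x = upwardOrientation G} = ∅ :=
    Set.eq_empty_of_forall_notMem fun x => kNND_ne_upwardOrientation (by omega) hk nrm x G
  have hprob := hDRD (upwardOrientation G) isDigraph_upwardOrientation
  rw [hnever, underlying_upwardOrientation (mem_filter.mp hG).2, nAS_upwardOrientation,
    nS_upwardOrientation, measure_empty, ENNReal.toReal_zero, pow_zero, mul_one] at hprob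
  have : 0 < PG G * (1 - pd) ^ (upwardOrientation G).card :=
    mul_pos hGpos (pow_pos (by linarith) _)
  exact this.ne' hprob.symm

/-- No random nearest neighbor digraph is a direction random digraph. -/
theorem stmt11 {n d k : ℕ} (hn : 3 ≤ n) (hd : 1 ≤ d) (hk : 1 ≤ k) (hkn : k < n - 1)
    (nrm : (Fin d → ℝ) → ℝ)
    (hnrm0 : ∀ v, nrm v = 0 ↔ v = 0)
    (hnrm_smul : ∀ (c : ℝ) (v : Fin d → ℝ), nrm (c • v) = |c| * nrm v)
    (hnrm_add : ∀ u v : Fin d → ℝ, nrm (u + v) ≤ nrm u + nrm v)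
    (μ : Measure (Fin d → ℝ)) [IsProbabilityMeasure μ]
    (htf : ∀ᵐ x ∂(Measure.pi fun _ : Fin n => μ), TieFree nrm x) :
    ¬ ∃ (PG : Finset (Sym2 (Fin n)) → ℝ) (pd : ℝ),
        (∀ G, 0 ≤ PG G) ∧
        (∑ G ∈ Finset.univ.filter (fun G : Finset (Sym2 (Fin n)) => IsGraph G), PG G = 1) ∧
        1 / 2 ≤ pd ∧ pd < 1 ∧
        ∀ A : Finset (Fin n × Fin n), IsDigraph A →
          (Measure.pi (fun _ : Fin n => μ) {x | kNND k nrm x = A}).toReal =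
            PG (underlying A) * (1 - pd) ^ nAS A * (2 * pd - 1) ^ nS A :=
  stmt11_general hn hk nrm μ
end

section
/- Positive dependence in vertex-arc random digraphs: for any probability space (Ω,μ), any measurable φ : Ω × Ω → [0,1], and any 2 ≤ m ≤ n, the VARD D(n,Ω,μ,φ) satisfies P({(1,2),(1,3),…,(1,m)} ⊆ A(D)) ≥ P((1,2) ∈ A(D))^{m−1}; equivalently, ∫ ∏_{i=2}^{m} φ(x₁,x_i) dμ^m(x₁,…,x_m) ≥ ( ∫∫ φ(x,y) dμ(x)dμ(y) )^{m−1}. -/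
/-!
Conditionally on the label `a` of vertex `1`, the arcs `(1,i)` are independent, each present with
probability `f a = ∫ φ(a, y) dμ(y)`; so the star probability is `∫ f^(m-1) dμ`, while the single
arc probability is `∫ f dμ`. Jensen's inequality for the convex map `t ↦ t^(m-1)` on `[0, ∞)`
concludes.
-/

open MeasureTheory Finset

theorem Fin.prod_univ_erase_zero {M : Type*} [CommMonoid M] {k : ℕ} (f : Fin (k + 1) → M) :
    ∏ i ∈ univ.erase 0, f i = ∏ i : Fin k, f i.succ := by
  rw [← compl_singleton, ← Fin.image_succ_univ, prod_image (Fin.succ_injective _).injOn]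

theorem pow_integral_le_integral_pow {α : Type*} [MeasurableSpace α] {μ : Measure α}
    [IsProbabilityMeasure μ] {f : α → ℝ} (hf₀ : ∀ᵐ x ∂μ, 0 ≤ f x) (hf : Integrable f μ) (k : ℕ)
    (hfk : Integrable (fun x ↦ f x ^ k) μ) :
    (∫ x, f x ∂μ) ^ k ≤ ∫ x, f x ^ k ∂μ :=
  (convexOn_pow k).map_integral_le (continuous_pow k).continuousOn isClosed_Ici hf₀ hf hfk

theorem integral_pi_prod_star_eq_integral_pow {Ω : Type*} [MeasurableSpace Ω] (μ : Measure Ω)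
    [IsFiniteMeasure μ] {φ : Ω → Ω → ℝ} (hφ : Measurable (Function.uncurry φ)) {C : ℝ}
    (hC : ∀ x y, ‖φ x y‖ ≤ C) (k : ℕ) :
    ∫ x : Fin (k + 1) → Ω, ∏ i : Fin k, φ (x 0) (x i.succ) ∂(Measure.pi fun _ ↦ μ) =
      ∫ a, (∫ y, φ a y ∂μ) ^ k ∂μ := by
  rw [← (measurePreserving_piFinSuccAbove (fun _ ↦ μ) 0).symm.integral_comp']
  simp only [MeasurableEquiv.piFinSuccAbove_symm_apply, Fin.insertNthEquiv, Equiv.coe_fn_mk,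
    Fin.insertNth_zero', Fin.cons_zero, Fin.cons_succ]
  have hmeas : Measurable fun p : Ω × (Fin k → Ω) ↦ ∏ i : Fin k, φ p.1 (p.2 i) := by fun_prop
  have hint : Integrable (fun p : Ω × (Fin k → Ω) ↦ ∏ i : Fin k, φ p.1 (p.2 i))
      (μ.prod (Measure.pi fun _ ↦ μ)) := by
    refine .of_bound hmeas.aestronglyMeasurable (C ^ k) (ae_of_all _ fun p ↦ ?_)
    rw [norm_prod]
    exact (prod_le_prod (fun _ _ ↦ norm_nonneg _) fun i _ ↦ hC _ _).trans (by simp)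
  rw [integral_prod _ hint]
  simp only [integral_fintype_prod_eq_pow, Fintype.card_fin]

theorem stmt12 {m : ℕ} (hm : 2 ≤ m)
    {Ω : Type*} [MeasurableSpace Ω] (μ : Measure Ω) [IsProbabilityMeasure μ]
    (φ : Ω → Ω → ℝ) (hmeas : Measurable (Function.uncurry φ))
    (hφ : ∀ x y, φ x y ∈ Set.Icc (0 : ℝ) 1) :
    (∫ x : Fin m → Ω,
        ∏ i ∈ Finset.univ.erase (⟨0, by omega⟩ : Fin m), φ (x ⟨0, by omega⟩) (x i)
          ∂(Measure.pi fun _ : Fin m => μ)) ≥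
      (∫ x, ∫ y, φ x y ∂μ ∂μ) ^ (m - 1) := by
  obtain ⟨k, rfl⟩ : ∃ k, m = k + 1 := ⟨m - 1, by omega⟩
  set f := fun a ↦ ∫ y, φ a y ∂μ
  have hf_meas : Measurable f := hmeas.stronglyMeasurable.integral_prod_right.measurable
  have hf_mem : ∀ a, f a ∈ Set.Icc (0 : ℝ) 1 := fun a ↦
    (convex_Icc 0 1).integral_mem isClosed_Icc (ae_of_all _ (hφ a))
      (.of_mem_Icc 0 1 hmeas.of_uncurry_left.aemeasurable (ae_of_all _ (hφ a)))
  have hφ_norm : ∀ x y, ‖φ x y‖ ≤ 1 := fun x y ↦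
    (Real.norm_of_nonneg (hφ x y).1).trans_le (hφ x y).2
  simp only [Fin.mk_zero, Nat.add_sub_cancel, Fin.prod_univ_erase_zero,
    integral_pi_prod_star_eq_integral_pow μ hmeas hφ_norm]
  exact pow_integral_le_integral_pow (ae_of_all _ fun a ↦ (hf_mem a).1)
    (.of_mem_Icc 0 1 hf_meas.aemeasurable (ae_of_all _ hf_mem)) k
    (.of_mem_Icc 0 1 (hf_meas.pow_const k).aemeasurable (ae_of_all _ fun a ↦
      ⟨pow_nonneg (hf_mem a).1 k, pow_le_one₀ (hf_mem a).1 (hf_mem a).2⟩))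
end

section
/- The underlying random graph of an arc random digraph is an edge random graph: for n ≥ 2, 0 < p_a < 1, and every graph G with vertex set [n], Σ_{D : U(D) = G} p_a^{|A(D)|} (1−p_a)^{n(n−1)−|A(D)|} = p_e^{|E(G)|} (1−p_e)^{C(n,2)−|E(G)|}, where p_e = 2p_a − p_a². -/
/-!
An arc set `A` has underlying graph `G` exactly when, for each edge `e = s(a, b)` of `G`, the arcs
of `A` lying over `e` form a nonempty subset of the fibre `{(a, b), (b, a)}`, and `A` has no other
arcs. The ARD weight therefore factors over the edges of `G`: with `q = 1 - pa`, each edge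
contributes `∑_{∅ ≠ B ⊆ fibre} pa ^ |B| * q ^ (2 - |B|) = (pa + q) ^ 2 - q ^ 2 = 2 pa - pa ^ 2`,
and the `n (n - 1) - 2 |G|` arcs over the non-edges contribute `q ^ 2 = 1 - p_e` per non-edge.
-/

open Finset

section Fibres

variable {α β R : Type*} [CommRing R]

theorem sum_powerset_filter_nonempty_pow_mul_pow (x y : R) (s : Finset α) :
    ∑ t ∈ s.powerset with t.Nonempty, x ^ #t * y ^ (#s - #t) = (x + y) ^ #s - y ^ #s := by
  have hempty : {t ∈ s.powerset | ¬t.Nonempty} = {∅} := by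
    ext t
    simp only [mem_filter, mem_powerset, not_nonempty_iff_eq_empty, mem_singleton]
    aesop
  rw [eq_sub_iff_add_eq, ← sum_pow_mul_eq_add_pow,
    ← sum_filter_add_sum_filter_not s.powerset Finset.Nonempty, hempty]
  simp

theorem image_eq_insert_iff [DecidableEq β] (f : α → β) {e : β} {G : Finset β} (he : e ∉ G)
    (A : Finset α) :
    A.image f = insert e G ↔ {a ∈ A | f a = e}.Nonempty ∧ {a ∈ A | f a ≠ e}.image f = G := by
  simp only [Finset.ext_iff, mem_image, mem_filter, mem_insert, Finset.Nonempty]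
  grind

variable [Fintype α] [DecidableEq β] (f : α → β)

theorem card_filter_apply_mem (G : Finset β) : #{a | f a ∈ G} = ∑ e ∈ G, #{a | f a = e} := by
  rw [card_eq_sum_card_fiberwise (f := f) (t := G) fun a ha => by simpa using ha]
  refine sum_congr rfl fun e he => congrArg card ?_
  ext a
  simp only [mem_filter, mem_univ, true_and, and_iff_right_iff_imp]
  exact fun h => h ▸ he

variable [DecidableEq α]

theorem sum_filter_image_eq_pow_mul_pow (x y : R) (G : Finset β) :
    ∑ A : Finset α with A.image f = G, x ^ #A * y ^ (#{a | f a ∈ G} - #A) =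
      ∏ e ∈ G, ((x + y) ^ #{a | f a = e} - y ^ #{a | f a = e}) := by
  induction G using Finset.induction_on with
  | empty => simp [filter_eq']
  | insert e G he ih =>
    rw [prod_insert he, ← ih, ← sum_powerset_filter_nonempty_pow_mul_pow, sum_mul_sum,
      ← sum_product']
    refine sum_nbij' (fun A => ({a ∈ A | f a = e}, {a ∈ A | f a ≠ e})) (fun p => p.1 ∪ p.2)
      ?_ ?_ ?_ ?_ ?_
    · intro A hA
      rw [mem_filter_univ, image_eq_insert_iff f he] at hA
      rw [mem_product, mem_filter, mem_powerset, mem_filter_univ]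
      exact ⟨⟨filter_subset_filter _ (subset_univ A), hA.1⟩, hA.2⟩
    · rintro ⟨B, A'⟩ hBA'
      simp only [mem_product, mem_filter, mem_powerset, mem_univ, true_and, subset_iff] at hBA' ⊢
      obtain ⟨⟨hB, a, ha⟩, rfl⟩ := hBA'
      simp only [Finset.ext_iff, mem_image, mem_union, mem_insert]
      grind
    · intro A _
      exact filter_union_filter_not_eq _ A
    · rintro ⟨B, A'⟩ hBA'
      simp only [mem_product, mem_filter, mem_powerset, mem_univ, true_and, subset_iff] at hBA'
      obtain ⟨⟨hB, -⟩, rfl⟩ := hBA'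
      simp only [Prod.ext_iff, Finset.ext_iff, mem_filter, mem_union]
      grind
    · intro A hA
      have hB : #{a ∈ A | f a = e} ≤ #{a | f a = e} :=
        card_le_card (filter_subset_filter _ (subset_univ A))
      have hA' : #{a ∈ A | f a ≠ e} ≤ #{a | f a ∈ G} := by
        refine card_le_card fun a ha => (mem_filter_univ _).2 ?_
        rw [mem_filter_univ, image_eq_insert_iff f he] at hA
        exact hA.2 ▸ mem_image_of_mem f ha
      dsimp only
      rw [card_filter_apply_mem, sum_insert he, ← card_filter_apply_mem,
        ← card_filter_add_card_filter_not (fun a => f a = e),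
        ← tsub_add_tsub_comm hB hA', pow_add, pow_add]
      ring

end Fibres

section Sym2

variable {α R : Type*} [Fintype α] [DecidableEq α] [CommRing R]

theorem card_filter_mk_eq_two {e : Sym2 α} (he : ¬e.IsDiag) :
    #{p : α × α | s(p.1, p.2) = e} = 2 := by
  induction e using Sym2.ind with
  | _ a b =>
    have hab : a ≠ b := by simpa using he
    calc #{p : α × α | s(p.1, p.2) = s(a, b)} = #{(a, b), (b, a)} := by
          congr 1; ext ⟨c, d⟩; simp
      _ = 2 := card_pair (by simp [hab])

theorem card_filter_mk_mem {G : Finset (Sym2 α)} (hG : ∀ e ∈ G, ¬e.IsDiag) :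
    #{p : α × α | s(p.1, p.2) ∈ G} = 2 * #G := by
  rw [card_filter_apply_mem, sum_congr rfl fun e he => card_filter_mk_eq_two (hG e he),
    sum_const, smul_eq_mul, mul_comm]

theorem card_le_choose_two {G : Finset (Sym2 α)} (hG : ∀ e ∈ G, ¬e.IsDiag) :
    #G ≤ (Fintype.card α).choose 2 := by
  rw [← Sym2.card_subtype_not_diag, Fintype.card_subtype]
  exact card_le_card fun e he => (mem_filter_univ _).2 (hG e he)

theorem sum_filter_image_mk_eq_pow (x y : R) {G : Finset (Sym2 α)} (hG : ∀ e ∈ G, ¬e.IsDiag) :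
    ∑ A : Finset (α × α) with A.image (fun p => s(p.1, p.2)) = G, x ^ #A * y ^ (2 * #G - #A) =
      ((x + y) ^ 2 - y ^ 2) ^ #G := by
  rw [← card_filter_mk_mem hG, sum_filter_image_eq_pow_mul_pow,
    prod_congr rfl fun e he => by rw [card_filter_mk_eq_two (hG e he)], prod_const]

end Sym2

theorem stmt15_general {n : ℕ} {pa : ℝ}
    (G : Finset (Sym2 (Fin n))) (hG : ∀ e ∈ G, ¬ e.IsDiag) :
    ∑ A ∈ Finset.univ.filter (fun A : Finset (Fin n × Fin n) =>
        (∀ p ∈ A, p.1 ≠ p.2) ∧ A.image (fun p => s(p.1, p.2)) = G),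
      pa ^ A.card * (1 - pa) ^ (n * (n - 1) - A.card) =
    (2 * pa - pa ^ 2) ^ G.card * (1 - (2 * pa - pa ^ 2)) ^ (n.choose 2 - G.card) := by
  have hloopless : ∀ A : Finset (Fin n × Fin n), A.image (fun p => s(p.1, p.2)) = G →
      ∀ p ∈ A, p.1 ≠ p.2 := fun A hA p hp =>
    Sym2.mk_isDiag_iff.not.1 (hG _ (hA ▸ mem_image_of_mem _ hp))
  have hcardA : ∀ A : Finset (Fin n × Fin n), A.image (fun p => s(p.1, p.2)) = G →
      #A ≤ 2 * #G := fun A hA => card_filter_mk_mem hG ▸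
    card_le_card fun p hp => (mem_filter_univ _).2 (hA ▸ mem_image_of_mem _ hp)
  have hchoose : n * (n - 1) = 2 * n.choose 2 := by
    rw [Nat.choose_two_right, Nat.mul_div_cancel' (Nat.even_mul_pred_self n).two_dvd]
  have hGle : #G ≤ n.choose 2 := by simpa using card_le_choose_two hG
  calc _ = ∑ A : Finset (Fin n × Fin n) with A.image (fun p => s(p.1, p.2)) = G,
        pa ^ #A * (1 - pa) ^ (2 * #G - #A) * ((1 - pa) ^ 2) ^ (n.choose 2 - #G) := by
        refine sum_congr (filter_congr fun A _ => ⟨And.right, fun hA => ⟨hloopless A hA, hA⟩⟩)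
          fun A hA => ?_
        have := hcardA A (mem_filter.1 hA).2
        rw [← pow_mul, mul_assoc, ← pow_add,
          show n * (n - 1) - #A = 2 * #G - #A + 2 * (n.choose 2 - #G) by omega]
    _ = _ := by
      rw [← sum_mul, sum_filter_image_mk_eq_pow _ _ hG]
      ring

/-- The underlying random graph of the arc random digraph `D(n, p_a)` is the edge random
graph `G(n, p_e)` with `p_e = 2p_a - p_a²`: for every loopless graph `G` on `[n]`, summing
the ARD probabilities over all digraphs whose underlying graph is `G` gives the ERG
probability of `G`. -/
theorem stmt15 {n : ℕ} (hn : 2 ≤ n) {pa : ℝ} (hpa0 : 0 < pa) (hpa1 : pa < 1)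
    (G : Finset (Sym2 (Fin n))) (hG : ∀ e ∈ G, ¬ e.IsDiag) :
    ∑ A ∈ Finset.univ.filter (fun A : Finset (Fin n × Fin n) =>
        (∀ p ∈ A, p.1 ≠ p.2) ∧ A.image (fun p => s(p.1, p.2)) = G),
      pa ^ A.card * (1 - pa) ^ (n * (n - 1) - A.card) =
    (2 * pa - pa ^ 2) ^ G.card * (1 - (2 * pa - pa ^ 2)) ^ (n.choose 2 - G.card) :=
  stmt15_general G hG
end

section
/- The underlying random graph of a vertex-arc random digraph D(n,Ω,μ,φ) is the vertex-edge random graph G(n,Ω,μ,φ_u) with φ_u(x,y) = φ(x,y) + φ(y,x) − φ(x,y)φ(y,x): for every graph G with vertex set [n], Σ_{D : U(D)=G} ∫ ∏_{(i,j)∈A(D)} φ(x_i,x_j) · ∏_{(i,j)∉A(D), i≠j} (1−φ(x_i,x_j)) dμⁿ(x) = ∫ ∏_{ij∈E(G)} φ_u(x_i,x_j) · ∏_{ij∉E(G), i≠j} (1−φ_u(x_i,x_j)) dμⁿ(x). -/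
/-!
For fixed vertex labels `x`, the arcs of the random digraph are independent coins, the arc
`(i, j)` being present with probability `φ(x_i, x_j)`. A digraph has underlying graph `G` iff,
for every unordered pair `{i, j}`, at least one of its two arcs is present exactly when
`ij ∈ G`. These events concern disjoint sets of coins, so the sum over all such digraphs factors
over the pairs, each factor being `1 - (1 - φ(x_i, x_j))(1 - φ(x_j, x_i)) = φ_u(x_i, x_j)` for an
edge and `(1 - φ(x_i, x_j))(1 - φ(x_j, x_i)) = 1 - φ_u(x_i, x_j)` for a non-edge. All integrands
are measurable with values in `[0, 1]`, so the finite sum commutes with the integral.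
-/

open MeasureTheory Finset

namespace Finset

variable {α ι R : Type*} [DecidableEq ι]

theorem image_eq_iff_forall_filter_nonempty {A : Finset α} {t G : Finset ι} {f : α → ι}
    (hf : ∀ x ∈ A, f x ∈ t) (hG : G ⊆ t) :
    A.image f = G ↔ ∀ i ∈ t, ({x ∈ A | f x = i}.Nonempty ↔ i ∈ G) := by
  have h_fiber : ∀ i, {x ∈ A | f x = i}.Nonempty ↔ i ∈ A.image f := by
    intro i; simp [Finset.Nonempty, mem_image]
  simp only [h_fiber, Finset.ext_iff]
  refine ⟨fun h i _ => h i, fun h i => ?_⟩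
  by_cases hi : i ∈ t
  · exact h i hi
  · exact iff_of_false (fun h' => hi (by obtain ⟨x, hx, rfl⟩ := mem_image.1 h'; exact hf x hx))
      (fun h' => hi (hG h'))

theorem sum_powerset_prod_fiberwise [DecidableEq α] [CommSemiring R] {s : Finset α}
    {t : Finset ι} {f : α → ι} (hf : ∀ a ∈ s, f a ∈ t) (F : ι → Finset α → R) :
    ∑ A ∈ s.powerset, ∏ i ∈ t, F i {a ∈ A | f a = i} =
      ∏ i ∈ t, ∑ B ∈ {a ∈ s | f a = i}.powerset, F i B := by
  rw [prod_sum]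
  refine sum_nbij' (fun A i _ => {a ∈ A | f a = i})
    (fun p => {a ∈ s | ∃ h : f a ∈ t, a ∈ p (f a) h}) ?_ ?_ ?_ ?_ ?_
  · intro A hA
    simp only [mem_powerset, mem_pi] at hA ⊢
    intro i _
    exact filter_subset_filter _ hA
  · intro p _
    simp only [mem_powerset]
    exact filter_subset _ _
  · intro A hA
    simp only [mem_powerset] at hA
    ext a
    simp only [mem_filter]
    constructor
    · rintro ⟨-, -, h, -⟩; exact h
    · intro ha; exact ⟨hA ha, hf a (hA ha), ha, trivial⟩
  · intro p hp
    simp only [mem_pi, mem_powerset] at hp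
    funext i hi
    ext a
    simp only [mem_filter]
    constructor
    · rintro ⟨⟨-, h, ha⟩, rfl⟩; exact ha
    · intro ha
      obtain ⟨has, rfl⟩ := mem_filter.1 (hp i hi ha)
      exact ⟨⟨has, hi, ha⟩, rfl⟩
  · intro A _
    exact (prod_attach t fun i => F i {a ∈ A | f a = i}).symm

end Finset

section BernoulliWeight

variable {α ι R : Type*} [DecidableEq α] [DecidableEq ι] [CommRing R]

/-- The probability that independent trials on `S` with success probabilities `a` succeed
exactly on `A`. -/
def bernoulliWeight (a : α → R) (S A : Finset α) : R :=
  (∏ x ∈ A, a x) * ∏ x ∈ S \ A, (1 - a x)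

theorem sum_bernoulliWeight_powerset (a : α → R) (S : Finset α) :
    ∑ A ∈ S.powerset, bernoulliWeight a S A = 1 := by
  simp only [bernoulliWeight, ← prod_add, add_sub_cancel, prod_const_one]

theorem sum_bernoulliWeight_nonempty_iff (a : α → R) (S : Finset α) (P : Prop) [Decidable P] :
    ∑ B ∈ S.powerset, (if (B.Nonempty ↔ P) then bernoulliWeight a S B else 0) =
      if P then 1 - ∏ x ∈ S, (1 - a x) else ∏ x ∈ S, (1 - a x) := by
  have h_empty : ∑ B ∈ S.powerset, (if B = ∅ then bernoulliWeight a S B else 0) =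
      ∏ x ∈ S, (1 - a x) := by
    simp [bernoulliWeight]
  split_ifs with hP
  · rw [← h_empty, ← sum_bernoulliWeight_powerset a S, eq_sub_iff_add_eq, ← sum_add_distrib]
    refine sum_congr rfl fun B _ => ?_
    by_cases hB : B = ∅ <;> simp [hP, hB, nonempty_iff_ne_empty]
  · simpa [hP, not_nonempty_iff_eq_empty] using h_empty

theorem bernoulliWeight_eq_prod_fiberwise {S A : Finset α} (hA : A ⊆ S) {t : Finset ι}
    {f : α → ι} (hf : ∀ x ∈ S, f x ∈ t) (a : α → R) :
    bernoulliWeight a S A =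
      ∏ i ∈ t, bernoulliWeight a {x ∈ S | f x = i} {x ∈ A | f x = i} := by
  have h_sdiff : ∀ i, {x ∈ S | f x = i} \ {x ∈ A | f x = i} = {x ∈ S \ A | f x = i} := by
    intro i; ext x; simp only [mem_sdiff, mem_filter]; tauto
  simp only [bernoulliWeight, prod_mul_distrib, h_sdiff,
    prod_fiberwise_of_maps_to (fun x hx => hf x (hA hx)),
    prod_fiberwise_of_maps_to (fun x hx => hf x (sdiff_subset hx))]

theorem sum_bernoulliWeight_image_eq {S : Finset α} {t G : Finset ι} {f : α → ι}
    (hf : ∀ x ∈ S, f x ∈ t) (hG : G ⊆ t) (a : α → R) :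
    ∑ A ∈ S.powerset with A.image f = G, bernoulliWeight a S A =
      ∏ i ∈ t, if i ∈ G then 1 - ∏ x ∈ S with f x = i, (1 - a x)
        else ∏ x ∈ S with f x = i, (1 - a x) := by
  have h_summand : ∀ A ∈ S.powerset,
      (if A.image f = G then bernoulliWeight a S A else 0) =
        ∏ i ∈ t, if ({x ∈ A | f x = i}.Nonempty ↔ i ∈ G) then
          bernoulliWeight a {x ∈ S | f x = i} {x ∈ A | f x = i} else 0 := by
    intro A hA
    have hAS := mem_powerset.1 hA
    rw [prod_ite_zero, bernoulliWeight_eq_prod_fiberwise hAS hf]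
    exact if_congr (image_eq_iff_forall_filter_nonempty (fun x hx => hf x (hAS hx)) hG) rfl rfl
  rw [sum_filter, sum_congr rfl h_summand, sum_powerset_prod_fiberwise hf
    fun i B => if (B.Nonempty ↔ i ∈ G) then bernoulliWeight a {x ∈ S | f x = i} B else 0]
  exact prod_congr rfl fun i _ => sum_bernoulliWeight_nonempty_iff a _ (i ∈ G)

end BernoulliWeight

section UnderlyingGraph

variable {n : ℕ} {R : Type*}

theorem sym2Mk_mem_image_lt_of_ne {p : Fin n × Fin n} (hp : p.1 ≠ p.2) :
    s(p.1, p.2) ∈ ({q | q.1 < q.2} : Finset (Fin n × Fin n)).image fun q => s(q.1, q.2) := by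
  rcases hp.lt_or_gt with h | h
  · exact mem_image_of_mem _ (mem_filter.2 ⟨mem_univ _, h⟩)
  · rw [Sym2.eq_swap]
    exact mem_image_of_mem (fun q : Fin n × Fin n => s(q.1, q.2))
      (mem_filter.2 ⟨mem_univ p.swap, h⟩)

theorem filter_offDiag_sym2Mk_eq {q : Fin n × Fin n} (hq : q.1 < q.2) :
    {p ∈ (univ : Finset (Fin n)).offDiag | s(p.1, p.2) = s(q.1, q.2)} = {q, q.swap} := by
  ext p
  simp only [mem_filter, mem_offDiag, mem_univ, true_and, Sym2.mk_eq_mk_iff, mem_insert,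
    mem_singleton]
  constructor
  · exact fun h => h.2
  · rintro (rfl | rfl)
    · exact ⟨hq.ne, Or.inl rfl⟩
    · exact ⟨hq.ne', Or.inr rfl⟩

theorem sum_bernoulliWeight_offDiag_image_sym2Mk [CommRing R] (G : Finset (Sym2 (Fin n)))
    (hG : ∀ e ∈ G, ¬ e.IsDiag) (a : Fin n × Fin n → R) :
    ∑ A ∈ (univ : Finset (Fin n)).offDiag.powerset with A.image (fun p => s(p.1, p.2)) = G,
        bernoulliWeight a univ.offDiag A =
      ∏ q ∈ univ with q.1 < q.2,
        if s(q.1, q.2) ∈ G then 1 - (1 - a q) * (1 - a q.swap)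
        else (1 - a q) * (1 - a q.swap) := by
  have h_maps : ∀ p ∈ (univ : Finset (Fin n)).offDiag,
      s(p.1, p.2) ∈ ({q | q.1 < q.2} : Finset (Fin n × Fin n)).image fun q => s(q.1, q.2) :=
    fun p hp => sym2Mk_mem_image_lt_of_ne (mem_offDiag.1 hp).2.2
  have h_sub : G ⊆ ({q | q.1 < q.2} : Finset (Fin n × Fin n)).image fun q => s(q.1, q.2) := by
    intro e he
    induction e using Sym2.ind with
    | h i j =>
      exact sym2Mk_mem_image_lt_of_ne (p := (i, j)) (Sym2.mk_isDiag_iff.not.1 (hG _ he))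
  have h_inj : Set.InjOn (fun q : Fin n × Fin n => s(q.1, q.2)) {q | q.1 < q.2} := by
    intro p hp q hq hpq
    rcases Sym2.mk_eq_mk_iff.1 hpq with h | rfl
    · exact h
    · exact absurd (show q.2 < q.1 from hp) (show q.1 < q.2 from hq).not_gt
  rw [sum_bernoulliWeight_image_eq h_maps h_sub, prod_image (by simpa using h_inj)]
  refine prod_congr rfl fun q hq => ?_
  have hq_lt : q.1 < q.2 := (mem_filter.1 hq).2
  rw [filter_offDiag_sym2Mk_eq hq_lt, prod_pair fun h => hq_lt.ne (congrArg Prod.fst h)]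

end UnderlyingGraph

section Integral

variable {α : Type*} [DecidableEq α]

theorem bernoulliWeight_mem_Icc {a : α → ℝ} (ha : ∀ x, a x ∈ Set.Icc 0 1) (S A : Finset α) :
    bernoulliWeight a S A ∈ Set.Icc 0 1 := by
  have h_prod : ∀ (s : Finset α) (b : α → ℝ), (∀ x, b x ∈ Set.Icc 0 1) →
      ∏ x ∈ s, b x ∈ Set.Icc 0 1 :=
    fun s b hb =>
      ⟨prod_nonneg fun x _ => (hb x).1, prod_le_one (fun x _ => (hb x).1) fun x _ => (hb x).2⟩
  exact unitInterval.mul_mem (h_prod A a ha)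
    (h_prod _ _ fun x => Set.Icc.mem_iff_one_sub_mem.1 (ha x))

theorem integrable_bernoulliWeight {X : Type*} [MeasurableSpace X] {μ : Measure X}
    [IsFiniteMeasure μ] {a : X → α → ℝ} (ha_meas : ∀ y, Measurable fun x => a x y)
    (ha : ∀ x y, a x y ∈ Set.Icc 0 1) (S A : Finset α) :
    Integrable (fun x => bernoulliWeight (a x) S A) μ := by
  have h_meas : Measurable fun x => bernoulliWeight (a x) S A := by
    unfold bernoulliWeight; fun_prop
  refine Integrable.of_bound h_meas.aestronglyMeasurable 1 (ae_of_all _ fun x => ?_)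
  have h := bernoulliWeight_mem_Icc (ha x) S A
  rw [Real.norm_of_nonneg h.1]
  exact h.2

end Integral

theorem vardP_eq_integral_bernoulliWeight {Ω : Type*} [MeasurableSpace Ω] (μ : Measure Ω)
    {n : ℕ} (φ : Ω → Ω → ℝ) (A : Finset (Fin n × Fin n)) :
    vardP μ φ A = ∫ x : Fin n → Ω, bernoulliWeight (fun p => φ (x p.1) (x p.2)) univ.offDiag A
      ∂(Measure.pi fun _ => μ) := by
  have h_compl :
      (univ.filter fun p : Fin n × Fin n => p.1 ≠ p.2 ∧ p ∉ A) = univ.offDiag \ A := by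
    ext p
    simp
  simp only [vardP, bernoulliWeight, h_compl]

/-- The underlying random graph of the vertex-arc random digraph `D(n, Ω, μ, φ)` is the
vertex-edge random graph `G(n, Ω, μ, φ_u)` with
`φ_u(x,y) = φ(x,y) + φ(y,x) - φ(x,y)φ(y,x)`: for every loopless graph `G` on `[n]`, summing
the VARD probabilities over all digraphs whose underlying graph is `G` gives the VERG
probability of `G`. -/
theorem stmt16 {n : ℕ} {Ω : Type*} [MeasurableSpace Ω] (μ : Measure Ω)
    [IsProbabilityMeasure μ] (φ : Ω → Ω → ℝ) (hmeas : Measurable (Function.uncurry φ))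
    (hφ : ∀ x y, φ x y ∈ Set.Icc (0 : ℝ) 1)
    (φu : Ω → Ω → ℝ) (hφu : ∀ x y, φu x y = φ x y + φ y x - φ x y * φ y x)
    (G : Finset (Sym2 (Fin n))) (hG : ∀ e ∈ G, ¬ e.IsDiag) :
    ∑ A ∈ Finset.univ.filter (fun A : Finset (Fin n × Fin n) =>
        (∀ p ∈ A, p.1 ≠ p.2) ∧ A.image (fun p : Fin n × Fin n => Sym2.mk p.1 p.2) = G),
      vardP μ φ A =
    ∫ x : Fin n → Ω,
      (∏ p ∈ Finset.univ.filter (fun p : Fin n × Fin n =>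
          p.1 < p.2 ∧ Sym2.mk p.1 p.2 ∈ G), φu (x p.1) (x p.2)) *
        ∏ p ∈ Finset.univ.filter (fun p : Fin n × Fin n =>
            p.1 < p.2 ∧ Sym2.mk p.1 p.2 ∉ G), (1 - φu (x p.1) (x p.2))
        ∂(Measure.pi fun _ : Fin n => μ) := by
  have h_arcs : (univ.filter fun A : Finset (Fin n × Fin n) =>
      (∀ p ∈ A, p.1 ≠ p.2) ∧ A.image (fun p => Sym2.mk p.1 p.2) = G) =
      {A ∈ (univ : Finset (Fin n)).offDiag.powerset | A.image (fun p => s(p.1, p.2)) = G} := by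
    ext A
    simp [subset_iff]
  have h_meas : ∀ p : Fin n × Fin n, Measurable fun x : Fin n → Ω => φ (x p.1) (x p.2) :=
    fun p => hmeas.comp (f := fun x : Fin n → Ω => (x p.1, x p.2)) (by fun_prop)
  simp only [h_arcs, vardP_eq_integral_bernoulliWeight]
  rw [← integral_finsetSum _ fun A _ =>
    integrable_bernoulliWeight h_meas (fun x p => hφ _ _) _ _]
  refine integral_congr_ae (ae_of_all _ fun x => ?_)
  beta_reduce
  rw [sum_bernoulliWeight_offDiag_image_sym2Mk G hG, prod_ite, filter_filter, filter_filter]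
  congr 1 <;> refine prod_congr rfl fun p _ => ?_ <;>
    rw [hφu, Prod.fst_swap, Prod.snd_swap] <;> ring
end

section
/- Let (Ω,μ) be a probability space and h : Ω × Ω → [0,1] a symmetric measurable function. If ∫∫∫∫ h(x₁,x₂) h(x₂,x₃) h(x₃,x₄) h(x₄,x₁) dμ(x₁)dμ(x₂)dμ(x₃)dμ(x₄) = ( ∫∫ h(x,y) dμ(x)dμ(y) )⁴, then h is constant μ×μ-almost everywhere, equal to ∫∫ h dμ dμ. -/
/-!
Let `T` be the integral operator with kernel `h`, `G x = ∫ h(x,y) dy` its degree function,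
`m = ∫ G` and `K = h ∘ h` the kernel of `T²`. By Fubini and symmetry `∫ G² = ∫∫ K`, and the
4-cycle integral equals `∫∫ K²`. Cauchy–Schwarz in the form `(∫ f)² ≤ ∫ f²` gives
`m² ≤ ∫∫ K` and `(∫∫ K)² ≤ m⁴`; the hypothesis forces equality in both, so `G = m` and
`K = m²` almost everywhere. For bounded `g` this gives `∫ T g = m ∫ g` and, since `T` is
self-adjoint, `∫ (T g)² = ∫ g · T² g = m² (∫ g)²`: `T g` has zero variance, so `T g = m ∫ g`.
With `g` an indicator, `∫_{A×B} h = m μ(A) μ(B)` on every rectangle, which forces `h = m` a.e.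
-/

open MeasureTheory ProbabilityTheory

section ProbabilityMeasure

variable {α : Type*} [MeasurableSpace α] {ν : Measure α} [IsProbabilityMeasure ν] {f : α → ℝ}

lemma sq_integral_le_integral_sq (hf : MemLp f 2 ν) : (∫ x, f x ∂ν) ^ 2 ≤ ∫ x, f x ^ 2 ∂ν := by
  have := variance_nonneg f ν
  rw [variance_eq_sub hf] at this
  exact sub_nonneg.1 this

lemma ae_eq_integral_of_integral_sq_le (hf : MemLp f 2 ν)
    (hle : ∫ x, f x ^ 2 ∂ν ≤ (∫ x, f x ∂ν) ^ 2) : ∀ᵐ x ∂ν, f x = ∫ x, f x ∂ν := by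
  refine ae_eq_integral_of_variance_eq_zero hf (le_antisymm ?_ (variance_nonneg f ν))
  rw [variance_eq_sub hf]
  exact sub_nonpos.2 hle

lemma abs_integral_le_one (hb : ∀ a, |f a| ≤ 1) : |∫ a, f a ∂ν| ≤ 1 := by
  simpa using norm_integral_le_of_norm_le_const (μ := ν) (f := f) (ae_of_all _ hb)

end ProbabilityMeasure

lemma abs_mul_le_one {a b : ℝ} (ha : |a| ≤ 1) (hb : |b| ≤ 1) : |a * b| ≤ 1 := by
  rw [abs_mul]; exact mul_le_one₀ ha (abs_nonneg b) hb

section FiniteMeasure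

variable {α : Type*} [MeasurableSpace α] {ν : Measure α} [IsFiniteMeasure ν] {f : α → ℝ}

lemma integrable_of_abs_le_one (hf : Measurable f) (hb : ∀ a, |f a| ≤ 1) : Integrable f ν :=
  .of_bound hf.aestronglyMeasurable 1 (ae_of_all _ hb)

lemma memLp_of_abs_le_one (hf : Measurable f) (hb : ∀ a, |f a| ≤ 1) (p : ENNReal) :
    MemLp f p ν :=
  .of_bound hf.aestronglyMeasurable 1 (ae_of_all _ hb)

end FiniteMeasure

lemma ae_eq_of_setIntegral_prod_eq {α β : Type*} [MeasurableSpace α] [MeasurableSpace β]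
    {μ : Measure (α × β)} {f g : α × β → ℝ} (hf : Integrable f μ) (hg : Integrable g μ)
    (hf₀ : 0 ≤ᵐ[μ] f) (hg₀ : 0 ≤ᵐ[μ] g)
    (hfg : ∀ ⦃s : Set α⦄, MeasurableSet s → ∀ ⦃t : Set β⦄, MeasurableSet t →
      ∫ x in s ×ˢ t, f x ∂μ = ∫ x in s ×ˢ t, g x ∂μ) :
    f =ᵐ[μ] g := by
  have hlin := ae_eq_of_setLIntegral_prod_eq hf.aemeasurable.ennreal_ofReal
    hg.aemeasurable.ennreal_ofReal hf.lintegral_lt_top.ne fun s hs t ht => by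
      rw [← ofReal_integral_eq_lintegral_ofReal hf.integrableOn (ae_restrict_of_ae hf₀),
        ← ofReal_integral_eq_lintegral_ofReal hg.integrableOn (ae_restrict_of_ae hg₀), hfg hs ht]
  filter_upwards [hlin, hf₀, hg₀] with x hx hfx hgx
  exact (ENNReal.ofReal_eq_ofReal_iff hfx hgx).1 hx

section IntegralOperator

variable {Ω : Type*} [MeasurableSpace Ω] (μ : Measure Ω)

noncomputable def integralOperator (k : Ω → Ω → ℝ) (g : Ω → ℝ) (x : Ω) : ℝ := ∫ y, k x y * g y ∂μ

noncomputable def kernelComp (k l : Ω → Ω → ℝ) (x z : Ω) : ℝ := ∫ y, k x y * l y z ∂μ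

variable {μ} {k l : Ω → Ω → ℝ} {f g : Ω → ℝ}

lemma measurable_integralOperator [SFinite μ] (hk : Measurable (Function.uncurry k))
    (hg : Measurable g) :
    Measurable (integralOperator μ k g) :=
  (hk.mul (hg.comp measurable_snd)).stronglyMeasurable.integral_prod_right.measurable

lemma measurable_kernelComp [SFinite μ] (hk : Measurable (Function.uncurry k))
    (hl : Measurable (Function.uncurry l)) : Measurable (Function.uncurry (kernelComp μ k l)) :=
  (((hk.comp (measurable_fst.fst.prodMk measurable_snd)).mul
    (hl.comp (measurable_snd.prodMk measurable_fst.snd))).stronglyMeasurable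
    |>.integral_prod_right).measurable

lemma setIntegral_prod_eq_setIntegral_integralOperator_indicator [SFinite μ]
    (hk : Integrable (fun p : Ω × Ω => k p.1 p.2) (μ.prod μ)) (A : Set Ω) {B : Set Ω}
    (hB : MeasurableSet B) :
    ∫ p in A ×ˢ B, k p.1 p.2 ∂μ.prod μ = ∫ x in A, integralOperator μ k (B.indicator 1) x ∂μ := by
  rw [setIntegral_prod _ hk.integrableOn]
  congr 1 with x
  rw [integralOperator, ← integral_indicator hB]
  congr 1 with y
  by_cases hy : y ∈ B <;> simp [hy]

variable [IsProbabilityMeasure μ]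

lemma abs_integralOperator_le_one (hk : ∀ x y, |k x y| ≤ 1) (hg : ∀ y, |g y| ≤ 1) (x : Ω) :
    |integralOperator μ k g x| ≤ 1 :=
  abs_integral_le_one fun y => abs_mul_le_one (hk x y) (hg y)

lemma abs_kernelComp_le_one (hk : ∀ x y, |k x y| ≤ 1) (hl : ∀ x y, |l x y| ≤ 1) (x z : Ω) :
    |kernelComp μ k l x z| ≤ 1 :=
  abs_integral_le_one fun y => abs_mul_le_one (hk x y) (hl y z)

lemma integral_mul_integralOperator (hf : Measurable f) (hk : Measurable (Function.uncurry k))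
    (hg : Measurable g) (hfb : ∀ x, |f x| ≤ 1) (hkb : ∀ x y, |k x y| ≤ 1) (hgb : ∀ y, |g y| ≤ 1) :
    ∫ x, f x * integralOperator μ k g x ∂μ = ∫ y, (∫ x, f x * k x y ∂μ) * g y ∂μ := by
  have hint : Integrable (Function.uncurry fun x y => f x * (k x y * g y)) (μ.prod μ) :=
    integrable_of_abs_le_one ((hf.comp measurable_fst).mul (hk.mul (hg.comp measurable_snd)))
      fun p => abs_mul_le_one (hfb _) (abs_mul_le_one (hkb _ _) (hgb _))
  simp only [integralOperator, ← integral_const_mul, ← integral_mul_const, mul_assoc]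
  exact integral_integral_swap hint

lemma integralOperator_kernelComp (hk : Measurable (Function.uncurry k))
    (hl : Measurable (Function.uncurry l)) (hg : Measurable g) (hkb : ∀ x y, |k x y| ≤ 1)
    (hlb : ∀ x y, |l x y| ≤ 1) (hgb : ∀ y, |g y| ≤ 1) (x : Ω) :
    integralOperator μ (kernelComp μ k l) g x = integralOperator μ k (integralOperator μ l g) x :=
  (integral_mul_integralOperator (hk.comp measurable_prodMk_left) hl hg (hkb x) hlb hgb).symm

end IntegralOperator

section SymmetricKernel

variable {Ω : Type*} [MeasurableSpace Ω] {μ : Measure Ω} {h : Ω → Ω → ℝ} {f g : Ω → ℝ}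

lemma kernelComp_comm_of_symm (hsym : ∀ x y, h x y = h y x) (x z : Ω) :
    kernelComp μ h h x z = kernelComp μ h h z x := by
  refine integral_congr_ae (ae_of_all _ fun y => ?_)
  simp only [hsym x y, hsym y z, mul_comm]

variable [IsProbabilityMeasure μ]

lemma integral_mul_integralOperator_of_symm (hh : Measurable (Function.uncurry h))
    (hhb : ∀ x y, |h x y| ≤ 1) (hsym : ∀ x y, h x y = h y x) (hf : Measurable f)
    (hg : Measurable g) (hfb : ∀ x, |f x| ≤ 1) (hgb : ∀ y, |g y| ≤ 1) :
    ∫ x, f x * integralOperator μ h g x ∂μ = ∫ y, integralOperator μ h f y * g y ∂μ := by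
  rw [integral_mul_integralOperator hf hh hg hfb hhb hgb]
  simp only [integralOperator, hsym _ _, mul_comm (f _)]

lemma integral_integralOperator_of_symm (hh : Measurable (Function.uncurry h))
    (hhb : ∀ x y, |h x y| ≤ 1) (hsym : ∀ x y, h x y = h y x) (hg : Measurable g)
    (hgb : ∀ y, |g y| ≤ 1) :
    ∫ x, integralOperator μ h g x ∂μ = ∫ y, (∫ z, h y z ∂μ) * g y ∂μ := by
  simpa [integralOperator] using
    integral_mul_integralOperator_of_symm hh hhb hsym measurable_const hg (fun _ => abs_one.le)
      hgb

lemma integral_cycle_four_eq (hh : Measurable (Function.uncurry h)) (hhb : ∀ x y, |h x y| ≤ 1)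
    (hsym : ∀ x y, h x y = h y x) :
    ∫ x₁, ∫ x₂, ∫ x₃, ∫ x₄, h x₁ x₂ * h x₂ x₃ * h x₃ x₄ * h x₄ x₁ ∂μ ∂μ ∂μ ∂μ
      = ∫ p, kernelComp μ h h p.1 p.2 ^ 2 ∂(μ.prod μ) := by
  have hK := measurable_kernelComp (μ := μ) hh hh
  have hKb := abs_kernelComp_le_one (μ := μ) hhb hhb
  rw [integral_prod (fun p : Ω × Ω => kernelComp μ h h p.1 p.2 ^ 2)
      (integrable_of_abs_le_one (hK.pow_const 2) fun p => by
        simpa [sq] using abs_mul_le_one (hKb p.1 p.2) (hKb p.1 p.2))]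
  refine integral_congr_ae (ae_of_all _ fun x => ?_)
  have inner : ∀ x₂ x₃, ∫ x₄, h x x₂ * h x₂ x₃ * h x₃ x₄ * h x₄ x ∂μ
      = h x x₂ * (h x₂ x₃ * kernelComp μ h h x₃ x) := fun x₂ x₃ => by
    simp only [kernelComp, ← integral_const_mul, mul_assoc]
  simp only [inner, integral_const_mul]
  change integralOperator μ h (integralOperator μ h (kernelComp μ h h · x)) x = _
  rw [← integralOperator_kernelComp (g := (kernelComp μ h h · x)) hh hh
    (hK.comp measurable_prodMk_right) hhb hhb fun z => hKb z x]
  simp only [integralOperator, kernelComp_comm_of_symm hsym _ x, sq]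

lemma integral_kernelComp_eq_integral_sq (hh : Measurable (Function.uncurry h))
    (hhb : ∀ x y, |h x y| ≤ 1) (hsym : ∀ x y, h x y = h y x) :
    ∫ p, kernelComp μ h h p.1 p.2 ∂(μ.prod μ) = ∫ x, (∫ y, h x y ∂μ) ^ 2 ∂μ := by
  have hT1 := measurable_integralOperator (μ := μ) hh measurable_const (g := 1)
  have hT1b := abs_integralOperator_le_one (μ := μ) hhb (g := 1) fun _ => abs_one.le
  rw [integral_prod (fun p : Ω × Ω => kernelComp μ h h p.1 p.2)
    (integrable_of_abs_le_one (measurable_kernelComp hh hh) fun p =>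
      abs_kernelComp_le_one hhb hhb p.1 p.2)]
  calc ∫ x, ∫ z, kernelComp μ h h x z ∂μ ∂μ
      = ∫ x, integralOperator μ h (integralOperator μ h 1) x ∂μ := by
        refine integral_congr_ae (ae_of_all _ fun x => ?_)
        rw [← integralOperator_kernelComp (g := 1) hh hh measurable_const hhb hhb
          fun _ => abs_one.le]
        simp only [integralOperator, Pi.one_apply, mul_one]
    _ = ∫ x, (∫ y, h x y ∂μ) ^ 2 ∂μ := by
        rw [integral_integralOperator_of_symm hh hhb hsym hT1 hT1b]
        simp only [integralOperator, Pi.one_apply, mul_one, sq]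

lemma ae_eq_of_integral_cycle_four_eq (hh : Measurable (Function.uncurry h))
    (hhb : ∀ x y, |h x y| ≤ 1) (hsym : ∀ x y, h x y = h y x)
    (hcyc : ∫ x₁, ∫ x₂, ∫ x₃, ∫ x₄, h x₁ x₂ * h x₂ x₃ * h x₃ x₄ * h x₄ x₁ ∂μ ∂μ ∂μ ∂μ
      = (∫ x, ∫ y, h x y ∂μ ∂μ) ^ 4) :
    (∀ᵐ x ∂μ, ∫ y, h x y ∂μ = ∫ x, ∫ y, h x y ∂μ ∂μ) ∧
      ∀ᵐ p ∂(μ.prod μ), kernelComp μ h h p.1 p.2 = (∫ x, ∫ y, h x y ∂μ ∂μ) ^ 2 := by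
  set m := ∫ x, ∫ y, h x y ∂μ ∂μ
  set c := ∫ p, kernelComp μ h h p.1 p.2 ∂(μ.prod μ)
  have hG : MemLp (fun x => ∫ y, h x y ∂μ) 2 μ :=
    memLp_of_abs_le_one hh.stronglyMeasurable.integral_prod_right.measurable
      (fun x => abs_integral_le_one (hhb x)) 2
  have hK : MemLp (fun p : Ω × Ω => kernelComp μ h h p.1 p.2) 2 (μ.prod μ) :=
    memLp_of_abs_le_one (measurable_kernelComp hh hh)
      (fun p => abs_kernelComp_le_one hhb hhb p.1 p.2) 2
  have hc : c = ∫ x, (∫ y, h x y ∂μ) ^ 2 ∂μ := integral_kernelComp_eq_integral_sq hh hhb hsym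
  have hK2 : ∫ p, kernelComp μ h h p.1 p.2 ^ 2 ∂(μ.prod μ) = m ^ 4 := by
    rw [← integral_cycle_four_eq hh hhb hsym, hcyc]
  have hmc : m ^ 2 ≤ c := hc ▸ sq_integral_le_integral_sq hG
  have hcm : c ^ 2 ≤ m ^ 4 := hK2 ▸ sq_integral_le_integral_sq hK
  have hc_eq : c = m ^ 2 := by nlinarith [sq_nonneg m]
  refine ⟨ae_eq_integral_of_integral_sq_le hG (by rw [← hc, hc_eq]), ?_⟩
  have hc_sq : c ^ 2 = m ^ 4 := by rw [hc_eq, ← pow_mul]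
  simpa only [← hc_eq] using ae_eq_integral_of_integral_sq_le hK (hK2.trans hc_sq.symm).le

lemma integralOperator_ae_eq_of_ae_eq (hh : Measurable (Function.uncurry h))
    (hhb : ∀ x y, |h x y| ≤ 1) (hsym : ∀ x y, h x y = h y x) {m : ℝ}
    (hG : ∀ᵐ x ∂μ, ∫ y, h x y ∂μ = m)
    (hK : ∀ᵐ p ∂(μ.prod μ), kernelComp μ h h p.1 p.2 = m ^ 2) (hg : Measurable g)
    (hgb : ∀ y, |g y| ≤ 1) :
    ∀ᵐ x ∂μ, integralOperator μ h g x = m * ∫ y, g y ∂μ := by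
  have hTg := measurable_integralOperator (μ := μ) hh hg
  have hTgb := abs_integralOperator_le_one (μ := μ) hhb hgb
  have hmean : ∫ x, integralOperator μ h g x ∂μ = m * ∫ y, g y ∂μ := by
    rw [integral_integralOperator_of_symm hh hhb hsym hg hgb, ← integral_const_mul]
    exact integral_congr_ae (by filter_upwards [hG] with y hy; rw [hy])
  have hint : Integrable (fun p : Ω × Ω => g p.1 * (kernelComp μ h h p.1 p.2 * g p.2))
      (μ.prod μ) :=
    integrable_of_abs_le_one ((hg.comp measurable_fst).mul
        ((measurable_kernelComp hh hh).mul (hg.comp measurable_snd)))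
      fun p => abs_mul_le_one (hgb _) (abs_mul_le_one (abs_kernelComp_le_one hhb hhb _ _) (hgb _))
  have hsq : ∫ x, integralOperator μ h g x ^ 2 ∂μ = m ^ 2 * (∫ y, g y ∂μ) ^ 2 := calc
    _ = ∫ x, g x * integralOperator μ h (integralOperator μ h g) x ∂μ := by
        simp only [integral_mul_integralOperator_of_symm hh hhb hsym hg hTg hgb hTgb, sq]
    _ = ∫ p, g p.1 * (kernelComp μ h h p.1 p.2 * g p.2) ∂(μ.prod μ) := by
        simp only [← integralOperator_kernelComp hh hh hg hhb hhb hgb]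
        rw [integral_prod _ hint]
        simp only [integralOperator, integral_const_mul]
    _ = ∫ p, g p.1 * (m ^ 2 * g p.2) ∂(μ.prod μ) :=
        integral_congr_ae (by filter_upwards [hK] with p hp; rw [hp])
    _ = m ^ 2 * (∫ y, g y ∂μ) ^ 2 := by
        rw [integral_prod_mul g (fun y => m ^ 2 * g y), integral_const_mul]; ring
  have := ae_eq_integral_of_integral_sq_le (memLp_of_abs_le_one hTg hTgb 2)
    (by rw [hsq, hmean, mul_pow])
  rwa [hmean] at this

end SymmetricKernel

/-- If a symmetric measurable `h : Ω × Ω → [0,1]` satisfies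
`∫∫∫∫ h(x₁,x₂)h(x₂,x₃)h(x₃,x₄)h(x₄,x₁) = (∫∫ h)⁴`, then `h` is `μ×μ`-a.e. constant, equal
to `∫∫ h`. -/
theorem stmt18 {Ω : Type*} [MeasurableSpace Ω] (μ : Measure Ω) [IsProbabilityMeasure μ]
    (h : Ω → Ω → ℝ) (hmeas : Measurable (Function.uncurry h))
    (hsym : ∀ x y, h x y = h y x) (hrange : ∀ x y, h x y ∈ Set.Icc (0 : ℝ) 1)
    (hcyc : (∫ x₁, ∫ x₂, ∫ x₃, ∫ x₄,
        h x₁ x₂ * h x₂ x₃ * h x₃ x₄ * h x₄ x₁ ∂μ ∂μ ∂μ ∂μ) =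
      (∫ x, ∫ y, h x y ∂μ ∂μ) ^ 4) :
    ∀ᵐ q ∂(μ.prod μ), h q.1 q.2 = ∫ x, ∫ y, h x y ∂μ ∂μ := by
  set m := ∫ x, ∫ y, h x y ∂μ ∂μ
  have hb : ∀ x y, |h x y| ≤ 1 := fun x y =>
    abs_le.2 ⟨by linarith [(hrange x y).1], (hrange x y).2⟩
  have hm : 0 ≤ m := integral_nonneg fun x => integral_nonneg fun y => (hrange x y).1
  obtain ⟨hG, hK⟩ := ae_eq_of_integral_cycle_four_eq hmeas hb hsym hcyc
  have hint : Integrable (fun p : Ω × Ω => h p.1 p.2) (μ.prod μ) :=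
    integrable_of_abs_le_one hmeas fun p => hb p.1 p.2
  refine ae_eq_of_setIntegral_prod_eq hint (integrable_const m)
    (ae_of_all _ fun p => (hrange p.1 p.2).1) (ae_of_all _ fun _ => hm) fun A hA B hB => ?_
  have hT := integralOperator_ae_eq_of_ae_eq hmeas hb hsym hG hK
    (measurable_const.indicator hB) (g := B.indicator 1) fun y => by
      by_cases hy : y ∈ B <;> simp [hy]
  rw [setIntegral_prod_eq_setIntegral_integralOperator_indicator hint A hB,
    setIntegral_congr_ae hA (by filter_upwards [hT] with x hx _ using hx)]
  simp [integral_indicator_one hB, measureReal_prod_prod]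
  ring
end

section
/- Let (Ω,μ) be a probability space and s : Ω × Ω → ℝ a bounded measurable function such that s(x,y) = −s(y,x) for μ×μ-almost every (x,y) and ∫ s(x,y) s(y,z) dμ(y) = 0 for μ×μ-almost every (x,z). Then s(x,y) = 0 for μ×μ-almost every (x,y). -/
open MeasureTheory Function

/-!
By antisymmetry the hypothesis says that the Gram kernel `∫ s(x,y) s(x,z) dμ(x)` vanishes a.e.
Integrating it over `t × t` gives `∫ (∫_t s(x,y) dμ(y))² dμ(x) = 0`, so `s` integrates to zero
over every measurable rectangle, and a function with this property vanishes a.e.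
-/

namespace MeasureTheory

variable {α β : Type*} [MeasurableSpace α] [MeasurableSpace β]

theorem ae_eq_zero_of_forall_setIntegral_prod_eq_zero {μ : Measure (α × β)} {f : α × β → ℝ}
    (hf : Integrable f μ)
    (h : ∀ ⦃s : Set α⦄, MeasurableSet s → ∀ ⦃t : Set β⦄, MeasurableSet t →
      ∫ p in s ×ˢ t, f p ∂μ = 0) :
    f =ᵐ[μ] 0 := by
  have hpos_eq_neg : (fun p ↦ ENNReal.ofReal (f p)) =ᵐ[μ] fun p ↦ ENNReal.ofReal (-f p) := by
    refine ae_eq_of_setLIntegral_prod_eq hf.aemeasurable.ennreal_ofReal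
      hf.aemeasurable.neg.ennreal_ofReal hf.lintegral_lt_top.ne fun s hs t ht ↦ ?_
    have hfst := hf.restrict (s := s ×ˢ t)
    have := integral_eq_lintegral_pos_part_sub_lintegral_neg_part hfst
    rw [h hs ht, eq_comm, sub_eq_zero] at this
    exact (ENNReal.toReal_eq_toReal_iff' hfst.lintegral_lt_top.ne
      hfst.neg.lintegral_lt_top.ne).mp this
  filter_upwards [hpos_eq_neg] with p hp
  rcases le_total 0 (f p) with h | h
  · rw [ENNReal.ofReal_of_nonpos (neg_nonpos.2 h), ENNReal.ofReal_eq_zero] at hp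
    exact hp.antisymm h
  · rw [ENNReal.ofReal_of_nonpos h, eq_comm, ENNReal.ofReal_eq_zero, neg_nonpos] at hp
    exact h.antisymm hp

variable {μ : Measure α} {ν : Measure β} [IsFiniteMeasure μ] [IsFiniteMeasure ν]
  {s : α → β → ℝ} {C : ℝ}

theorem integrable_uncurry_of_abs_le (hs : Measurable (uncurry s)) (hC : ∀ x y, |s x y| ≤ C) :
    Integrable (uncurry s) (μ.prod ν) :=
  (integrable_const C).mono' hs.aestronglyMeasurable (ae_of_all _ fun p ↦ hC p.1 p.2)

theorem ae_setIntegral_eq_zero_of_ae_integral_mul_eq_zero (hs : Measurable (uncurry s))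
    (hC : ∀ x y, |s x y| ≤ C)
    (hgram : ∀ᵐ q ∂(ν.prod ν), ∫ x, s x q.1 * s x q.2 ∂μ = 0)
    (t : Set β) :
    ∀ᵐ x ∂μ, ∫ y in t, s x y ∂ν = 0 := by
  set νt := ν.restrict t
  have hint : Integrable (uncurry fun x (q : β × β) ↦ s x q.1 * s x q.2) (μ.prod (νt.prod νt)) := by
    refine (integrable_const (C * C)).mono' ?_ (ae_of_all _ fun p ↦ ?_)
    · exact ((hs.comp (measurable_fst.prodMk (measurable_fst.comp measurable_snd))).mul
        (hs.comp (measurable_fst.prodMk (measurable_snd.comp measurable_snd)))).aestronglyMeasurable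
    · rw [uncurry_apply_pair, Real.norm_eq_abs, abs_mul]
      exact mul_le_mul (hC _ _) (hC _ _) (abs_nonneg _) ((abs_nonneg _).trans (hC p.1 p.2.1))
  have hsq : ∫ x, (∫ y in t, s x y ∂ν) * ∫ y in t, s x y ∂ν ∂μ = 0 := by
    calc ∫ x, (∫ y in t, s x y ∂ν) * ∫ y in t, s x y ∂ν ∂μ
        = ∫ x, ∫ q, s x q.1 * s x q.2 ∂(νt.prod νt) ∂μ := by
          congr with x
          exact (integral_prod_mul _ _).symm
      _ = ∫ q, ∫ x, s x q.1 * s x q.2 ∂μ ∂(νt.prod νt) := integral_integral_swap hint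
      _ = 0 := by
          refine integral_eq_zero_of_ae ?_
          rw [Measure.prod_restrict]
          exact ae_restrict_of_ae hgram
  have hsq_int : Integrable (fun x ↦ (∫ y in t, s x y ∂ν) * ∫ y in t, s x y ∂ν) μ := by
    simp_rw [← integral_prod_mul]
    exact hint.integral_prod_left
  filter_upwards [(integral_eq_zero_iff_of_nonneg (fun x ↦ mul_self_nonneg _) hsq_int).mp hsq]
    with x hx
  exact mul_self_eq_zero.mp hx

theorem ae_eq_zero_of_ae_integral_mul_eq_zero (hs : Measurable (uncurry s))
    (hC : ∀ x y, |s x y| ≤ C)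
    (hgram : ∀ᵐ q ∂(ν.prod ν), ∫ x, s x q.1 * s x q.2 ∂μ = 0) :
    uncurry s =ᵐ[μ.prod ν] 0 := by
  have hint := integrable_uncurry_of_abs_le (μ := μ) (ν := ν) hs hC
  refine ae_eq_zero_of_forall_setIntegral_prod_eq_zero hint fun r _ t _ ↦ ?_
  rw [setIntegral_prod _ hint.integrableOn]
  exact integral_eq_zero_of_ae
    (ae_restrict_of_ae (ae_setIntegral_eq_zero_of_ae_integral_mul_eq_zero hs hC hgram t))

end MeasureTheory

/-- If a bounded measurable `s : Ω × Ω → ℝ` is antisymmetric `μ×μ`-a.e. and satisfies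
`∫ s(x,y) s(y,z) dμ(y) = 0` for `μ×μ`-a.e. `(x,z)`, then `s = 0` `μ×μ`-a.e. -/
theorem stmt19 {Ω : Type*} [MeasurableSpace Ω] (μ : Measure Ω) [IsProbabilityMeasure μ]
    (s : Ω → Ω → ℝ) (hmeas : Measurable (Function.uncurry s))
    (hbd : ∃ C : ℝ, ∀ x y, |s x y| ≤ C)
    (hanti : ∀ᵐ q ∂(μ.prod μ), s q.1 q.2 = -s q.2 q.1)
    (hzero : ∀ᵐ q ∂(μ.prod μ), (∫ y, s q.1 y * s y q.2 ∂μ) = 0) :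
    ∀ᵐ q ∂(μ.prod μ), s q.1 q.2 = 0 := by
  obtain ⟨C, hC⟩ := hbd
  have hanti' : ∀ᵐ q ∂(μ.prod μ), s q.2 q.1 = -s q.1 q.2 := by
    filter_upwards [hanti] with q hq using by rw [hq, neg_neg]
  have hanti_fst : ∀ᵐ q ∂(μ.prod μ), ∀ᵐ x ∂μ, s x q.1 = -s q.1 x :=
    Measure.quasiMeasurePreserving_fst.tendsto_ae.eventually (Measure.ae_ae_of_ae_prod hanti')
  have hgram : ∀ᵐ q ∂(μ.prod μ), ∫ x, s x q.1 * s x q.2 ∂μ = 0 := by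
    filter_upwards [hanti_fst, hzero] with q hq hq0
    rw [integral_congr_ae (hq.mono fun x hx ↦ by rw [hx, neg_mul]), integral_neg, hq0, neg_zero]
  exact ae_eq_zero_of_ae_integral_mul_eq_zero hmeas hC hgram
end
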